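/- arXiv:2508.10879 — 6 statements merged into one kernel-verified Lean document; each statement's English description precedes it below -/
import Mathlib

section
/- Let Σ be a d×d real symmetric positive semidefinite matrix, let k ≤ d, let ζ ∈ (0,1), and let u_1, …, u_k ∈ ℝ^d be unit vectors constructed as follows: set P_0 = I_d and P_i = P_{i-1} − u_i u_iᵀ, where each u_i lies in the image of P_{i-1} and satisfies ⟨u_i u_iᵀ, P_{i-1} Σ P_{i-1}⟩ ≥ (1 − ζ²)·‖P_{i-1} Σ P_{i-1}‖₂. Then the matrix U = [u_1, …, u_k] ∈ ℝ^{d×k} satisfies ⟨U Uᵀ, Σ⟩ ≥ (1 − ζ²)·‖Σ‖_(k). -/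
open Matrix
open scoped Matrix.Norms.L2Operator
open scoped RealInnerProductSpace

private lemma dot_eq_inner {d : ℕ} (x y : EuclideanSpace ℝ (Fin d)) :
    (x : Fin d → ℝ) ⬝ᵥ (y : Fin d → ℝ) = ⟪x, y⟫ := by
  simp [PiLp.inner_apply, dotProduct, RCLike.inner_apply, mul_comm]

private lemma quad_le_opNorm {d : ℕ} (A : Matrix (Fin d) (Fin d) ℝ) (x : EuclideanSpace ℝ (Fin d)) :
    (x : Fin d → ℝ) ⬝ᵥ (A *ᵥ (x : Fin d → ℝ)) ≤ ‖A‖ * ‖x‖ ^ 2 := by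
  have h1 : (x : Fin d → ℝ) ⬝ᵥ (A *ᵥ (x : Fin d → ℝ))
      = ⟪x, (EuclideanSpace.equiv (Fin d) ℝ).symm (A *ᵥ x)⟫ := dot_eq_inner x ((EuclideanSpace.equiv (Fin d) ℝ).symm (A *ᵥ x))
  calc (x : Fin d → ℝ) ⬝ᵥ (A *ᵥ (x : Fin d → ℝ))
      ≤ ‖x‖ * ‖(EuclideanSpace.equiv (Fin d) ℝ).symm (A *ᵥ (x : Fin d → ℝ))‖ := by
        rw [h1]; exact real_inner_le_norm _ _
    _ ≤ ‖x‖ * (‖A‖ * ‖x‖) := by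
        gcongr
        exact Matrix.l2_opNorm_mulVec A x
    _ = ‖A‖ * ‖x‖ ^ 2 := by ring

private lemma trace_transpose_vecMulVec_mul {d : ℕ} (u : Fin d → ℝ)
    (M : Matrix (Fin d) (Fin d) ℝ) :
    ((vecMulVec u u)ᵀ * M).trace = u ⬝ᵥ (M *ᵥ u) := by
  simp only [Matrix.trace, Matrix.diag, Matrix.mul_apply, Matrix.transpose_apply,
    Matrix.vecMulVec_apply, dotProduct, Matrix.mulVec, Finset.mul_sum]
  rw [Finset.sum_comm]
  apply Finset.sum_congr rfl; intro a _
  apply Finset.sum_congr rfl; intro b _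
  ring

private lemma lp_bound {d k : ℕ} (hk : k ≤ d) (hk0 : 0 < k) (ν c : Fin d → ℝ)
    (hν : Antitone ν) (hc0 : ∀ m, 0 ≤ c m) (hc1 : ∀ m, c m ≤ 1)
    (hsum : ∑ m, c m = k) :
    ∑ m, ν m * c m ≤ ∑ m ∈ Finset.univ.filter (fun m : Fin d => (m : ℕ) < k), ν m := by
  have hp : k - 1 < d := by omega
  set p : Fin d := ⟨k - 1, hp⟩ with hpdef
  have hcard : ∑ m : Fin d, (if (m : ℕ) < k then (1:ℝ) else 0) = k := by
    rw [Fin.sum_univ_eq_sum_range (fun i => if i < k then (1:ℝ) else 0) d,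
      ← Finset.sum_filter]
    have : (Finset.range d).filter (fun i => i < k) = Finset.range k := by
      ext j; simp; omega
    simp [this]
  have key : ∀ m : Fin d, ν m * c m - (if (m:ℕ) < k then ν m else 0)
      ≤ ν p * (c m - if (m:ℕ) < k then 1 else 0) := by
    intro m
    by_cases h : (m:ℕ) < k
    · simp only [if_pos h]
      have h2 : ν p ≤ ν m := hν (by rw [Fin.le_def]; simp [hpdef]; omega)
      nlinarith [hc1 m, hc0 m]
    · simp only [if_neg h]
      have h2 : ν m ≤ ν p := hν (by rw [Fin.le_def]; simp [hpdef]; omega)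
      nlinarith [hc0 m]
  have hs := Finset.sum_le_sum (fun m (_ : m ∈ Finset.univ) => key m)
  rw [Finset.sum_sub_distrib] at hs
  rw [← Finset.mul_sum, Finset.sum_sub_distrib, hsum, hcard, sub_self, mul_zero] at hs
  rw [← Finset.sum_filter] at hs
  linarith

private lemma stepB {d n : ℕ} (S : Matrix (Fin d) (Fin d) ℝ) (t C : ℝ)
    (b : Fin (n + 1) → EuclideanSpace ℝ (Fin d)) (hb : Orthonormal ℝ b)
    (lamb : Fin (n + 1) → ℝ) (hlamb : ∀ j, t ≤ lamb j)
    (hbS : ∀ j, S *ᵥ (b j : Fin d → ℝ) = lamb j • (b j : Fin d → ℝ))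
    (v : Fin n → EuclideanSpace ℝ (Fin d))
    (hquad : ∀ x : EuclideanSpace ℝ (Fin d), (∀ j, ⟪v j, x⟫ = 0) →
      (x : Fin d → ℝ) ⬝ᵥ (S *ᵥ (x : Fin d → ℝ)) ≤ C * ‖x‖ ^ 2) :
    t ≤ C := by
  classical
  set E := Submodule.span ℝ (Set.range b) with hE
  set F := (Submodule.span ℝ (Set.range v))ᗮ with hF
  have hEr : Module.finrank ℝ E = n + 1 := by
    rw [hE, finrank_span_eq_card hb.linearIndependent, Fintype.card_fin]
  have hFr : d ≤ Module.finrank ℝ F + n := by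
    have h1 := Submodule.finrank_add_finrank_orthogonal (K := Submodule.span ℝ (Set.range v))
    have h2 : Module.finrank ℝ (Submodule.span ℝ (Set.range v)) ≤ n := by
      simpa [Set.finrank] using finrank_range_le_card (R := ℝ) v
    have h3 : Module.finrank ℝ (EuclideanSpace ℝ (Fin d)) = d := by simp
    rw [← hF] at h1
    omega
  have hinf : E ⊓ F ≠ ⊥ := by
    intro hbot
    have h4 := Submodule.finrank_sup_add_finrank_inf_eq E F
    rw [hbot] at h4
    have h5 : Module.finrank ℝ ↥(E ⊔ F) ≤ d := by
      have := Submodule.finrank_le (E ⊔ F)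
      simpa using this
    rw [finrank_bot] at h4
    omega
  obtain ⟨x, hxmem, hx0⟩ := Submodule.exists_mem_ne_zero_of_ne_bot hinf
  have hxE : x ∈ E := hxmem.1
  have hxF : x ∈ F := hxmem.2
  have hxorth : ∀ j, ⟪v j, x⟫ = 0 := fun j =>
    (Submodule.mem_orthogonal _ _).mp hxF (v j) (Submodule.subset_span (Set.mem_range_self j))
  obtain ⟨a, hax⟩ := (Submodule.mem_span_range_iff_exists_fun ℝ).mp hxE
  have hSx : S *ᵥ (x : Fin d → ℝ) = ∑ j, (a j * lamb j) • (b j : Fin d → ℝ) := by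
    calc S *ᵥ (x : Fin d → ℝ) = S.mulVecLin (∑ j, a j • b j) := by rw [← hax, WithLp.ofLp_sum]; rfl
      _ = ∑ j, S.mulVecLin (a j • b j) := map_sum _ _ _
      _ = ∑ j, (a j * lamb j) • (b j : Fin d → ℝ) := by
          apply Finset.sum_congr rfl; intro j _
          show S *ᵥ (a j • (b j : Fin d → ℝ)) = _
          rw [Matrix.mulVec_smul, hbS j, smul_smul]
  have hquadval : (x : Fin d → ℝ) ⬝ᵥ (S *ᵥ (x : Fin d → ℝ)) = ∑ j, a j * (a j * lamb j) := by
    calc (x : Fin d → ℝ) ⬝ᵥ (S *ᵥ (x : Fin d → ℝ))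
        = (x : Fin d → ℝ) ⬝ᵥ (((∑ j, (a j * lamb j) • b j : EuclideanSpace ℝ (Fin d))) : Fin d → ℝ) := by
          congr 1
          rw [hSx, WithLp.ofLp_sum]; rfl
      _ = ⟪x, (∑ j, (a j * lamb j) • b j : EuclideanSpace ℝ (Fin d))⟫ := dot_eq_inner _ _
      _ = ⟪(∑ j, a j • b j : EuclideanSpace ℝ (Fin d)),
            (∑ j, (a j * lamb j) • b j : EuclideanSpace ℝ (Fin d))⟫ := by rw [hax]
      _ = ∑ j, a j * (a j * lamb j) := by
          simpa using hb.inner_sum a (fun j => a j * lamb j) Finset.univ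
  have hnorm : ‖x‖ ^ 2 = ∑ j, a j * a j := by
    rw [← real_inner_self_eq_norm_sq, ← hax]
    simpa using hb.inner_sum a a Finset.univ
  have hpos : 0 < ‖x‖ ^ 2 := pow_pos (norm_pos_iff.mpr hx0) 2
  have hlow : t * ‖x‖ ^ 2 ≤ (x : Fin d → ℝ) ⬝ᵥ (S *ᵥ (x : Fin d → ℝ)) := by
    rw [hquadval, hnorm, Finset.mul_sum]
    apply Finset.sum_le_sum
    intro j _
    have := hlamb j
    nlinarith [mul_self_nonneg (a j)]
  have hup := hquad x hxorth
  nlinarith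

/-- **Reduction from k-PCA to 1-ePCA (deflation).**
Let `S` be a `d × d` real symmetric PSD matrix, `k ≤ d`, `ζ ∈ (0,1)`, and let unit
vectors `u 0, …, u (k-1)` be produced by deflation: `P 0 = I`,
`P (i+1) = P i - uᵢ uᵢᵀ`, where each `uᵢ` lies in the image of `P i` and captures a
`(1 - ζ²)` fraction of `‖P i * S * P i‖₂`, i.e.
`⟨uᵢ uᵢᵀ, P i * S * P i⟩ ≥ (1 - ζ²) ‖P i * S * P i‖₂`.  Then the matrix
`U = [u 0, …, u (k-1)]` satisfies `⟨U Uᵀ, S⟩ ≥ (1 - ζ²) ‖S‖_(k)`, where the Ky Fan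
value `‖S‖_(k)` is the supremum of `Tr(V Vᵀ S)` over all `V ∈ ℝ^{d×k}` with
`Vᵀ V = I_k`. -/
theorem deflation_kPCA_from_onePCA {d k : ℕ} (hk : k ≤ d)
    (S : Matrix (Fin d) (Fin d) ℝ) (hS : S.PosSemidef)
    (ζ : ℝ) (hζ : ζ ∈ Set.Ioo (0 : ℝ) 1)
    (u : Fin k → (Fin d → ℝ)) (hunit : ∀ i, u i ⬝ᵥ u i = 1)
    (P : ℕ → Matrix (Fin d) (Fin d) ℝ)
    (hP0 : P 0 = 1)
    (hPsucc : ∀ i : Fin k, P ((i : ℕ) + 1) = P i - vecMulVec (u i) (u i))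
    (himage : ∀ i : Fin k, (P i) *ᵥ (u i) = u i)
    (happrox : ∀ i : Fin k,
      (1 - ζ ^ 2) * ‖P i * S * P i‖ ≤
        ((vecMulVec (u i) (u i))ᵀ * (P i * S * P i)).trace)
    (U : Matrix (Fin d) (Fin k) ℝ) (hU : ∀ i j, U i j = u j i) :
    (1 - ζ ^ 2) *
        sSup {x : ℝ | ∃ V : Matrix (Fin d) (Fin k) ℝ,
          Vᵀ * V = 1 ∧ x = ((V * Vᵀ)ᵀ * S).trace} ≤
      ((U * Uᵀ)ᵀ * S).trace := by
  classical
  obtain ⟨hζ0, hζ1⟩ := hζ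
  have hz : (0:ℝ) < 1 - ζ ^ 2 := by nlinarith
  -- the deflation formula for P
  have hPsum : ∀ n, n ≤ k → P n = 1 -
      ∑ j ∈ Finset.univ.filter (fun j : Fin k => (j : ℕ) < n), vecMulVec (u j) (u j) := by
    intro n
    induction n with
    | zero => intro _; simpa using hP0
    | succ n ih =>
      intro hn
      have hn' : n < k := hn
      have h1 := hPsucc ⟨n, hn'⟩
      simp only at h1
      rw [h1, ih (le_of_lt hn')]
      have h2 : Finset.univ.filter (fun j : Fin k => (j : ℕ) < n + 1)
          = insert (⟨n, hn'⟩ : Fin k) (Finset.univ.filter (fun j : Fin k => (j : ℕ) < n)) := by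
        ext j
        simp only [Finset.mem_filter, Finset.mem_univ, true_and, Finset.mem_insert, Fin.ext_iff]
        omega
      rw [h2, Finset.sum_insert (by simp)]
      abel
  -- symmetry of P
  have hPsymm : ∀ n, n ≤ k → (P n)ᵀ = P n := by
    intro n hn
    rw [hPsum n hn]
    simp only [Matrix.transpose_sub, Matrix.transpose_one, Matrix.transpose_sum]
    congr 1
    apply Finset.sum_congr rfl
    intro j _
    ext a b
    simp [Matrix.vecMulVec_apply, mul_comm]
  set μ : Fin k → ℝ := fun i => ‖P i * S * P i‖ with hμ
  have hμ0 : ∀ i, 0 ≤ μ i := fun i => norm_nonneg _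
  -- per-index lower bound on the captured variance
  have h2 : ∀ i : Fin k, (1 - ζ ^ 2) * μ i ≤ u i ⬝ᵥ (S *ᵥ u i) := by
    intro i
    have h := happrox i
    rw [trace_transpose_vecMulVec_mul] at h
    have hv : (P i * S * P i) *ᵥ u i = P i *ᵥ (S *ᵥ u i) := by
      rw [← Matrix.mulVec_mulVec, ← Matrix.mulVec_mulVec, himage i]
    rw [hv, Matrix.dotProduct_mulVec] at h
    have hvm : u i ᵥ* P i = u i := by
      conv_lhs => rw [← hPsymm i (le_of_lt i.isLt)]
      rw [Matrix.vecMul_transpose, himage i]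
    rwa [hvm] at h
  -- trace formula for U
  have h1 : ((U * Uᵀ)ᵀ * S).trace = ∑ i : Fin k, u i ⬝ᵥ (S *ᵥ u i) := by
    rw [Matrix.transpose_mul, Matrix.transpose_transpose]
    rw [Matrix.mul_assoc, Matrix.trace_mul_comm]
    simp only [Matrix.trace, Matrix.diag, Matrix.mul_apply, dotProduct, Matrix.mulVec,
      Matrix.transpose_apply, hU, Finset.mul_sum, dotProduct]
    apply Finset.sum_congr rfl; intro i _
    rw [Finset.sum_comm]
    apply Finset.sum_congr rfl; intro a _
    rw [Finset.sum_mul]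
    apply Finset.sum_congr rfl; intro b _
    ring
  -- bound every element of the Ky Fan set
  have h3 : ∀ x ∈ {x : ℝ | ∃ V : Matrix (Fin d) (Fin k) ℝ,
      Vᵀ * V = 1 ∧ x = ((V * Vᵀ)ᵀ * S).trace}, x ≤ ∑ i : Fin k, μ i := by
    rintro x ⟨V, hV, rfl⟩
    rcases Nat.eq_zero_or_pos k with hk0 | hk0
    · subst hk0
      have : V * Vᵀ = 0 := by ext a b; simp [Matrix.mul_apply]
      simp [this]
    -- spectral setup
    have hH : S.IsHermitian := hS.1
    set w := hH.eigenvectorBasis with hw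
    set lam := hH.eigenvalues with hlam
    have hlam0 : ∀ m, 0 ≤ lam m := hS.eigenvalues_nonneg
    have heig : ∀ j, S *ᵥ (w j : Fin d → ℝ) = lam j • (w j : Fin d → ℝ) :=
      fun j => hH.mulVec_eigenvectorBasis j
    set Q : Matrix (Fin d) (Fin d) ℝ := Matrix.of (fun m n => w n m) with hQ
    have hQQ : Qᵀ * Q = 1 := by
      ext a b
      have := (orthonormal_iff_ite.mp w.orthonormal) a b
      simp only [PiLp.inner_apply, RCLike.inner_apply, conj_trivial] at this
      simp only [Matrix.mul_apply, Matrix.transpose_apply, hQ, Matrix.of_apply, Matrix.one_apply]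
      rw [← this]
      exact Finset.sum_congr rfl fun j _ => mul_comm _ _
    have hQQ' : Q * Qᵀ = 1 := mul_eq_one_comm.mp hQQ
    have hSQ : S * Q = Q * Matrix.diagonal lam := by
      ext a n
      have := congrFun (heig n) a
      simp only [Matrix.mulVec, dotProduct, Pi.smul_apply, smul_eq_mul] at this
      rw [Matrix.mul_apply, Matrix.mul_diagonal]
      simp only [hQ, Matrix.of_apply]
      rw [show ∑ b, S a b * w n b = lam n * w n a from this]
      ring
    have hSdecomp : S = Q * Matrix.diagonal lam * Qᵀ := by
      calc S = S * (Q * Qᵀ) := by rw [hQQ', Matrix.mul_one]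
        _ = (S * Q) * Qᵀ := by rw [Matrix.mul_assoc]
        _ = Q * Matrix.diagonal lam * Qᵀ := by rw [hSQ]
    set M : Matrix (Fin k) (Fin d) ℝ := Vᵀ * Q with hM
    have hMM : M * Mᵀ = 1 := by
      rw [hM, Matrix.transpose_mul, Matrix.transpose_transpose]
      calc Vᵀ * Q * (Qᵀ * V) = Vᵀ * (Q * Qᵀ) * V := by
            simp only [Matrix.mul_assoc]
        _ = 1 := by rw [hQQ', Matrix.mul_one, hV]
    have htr : ((V * Vᵀ)ᵀ * S).trace = ∑ m : Fin d, lam m * (Mᵀ * M) m m := by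
      rw [Matrix.transpose_mul, Matrix.transpose_transpose]
      conv_lhs => rw [hSdecomp]
      calc (V * Vᵀ * (Q * Matrix.diagonal lam * Qᵀ)).trace
          = ((V * (Vᵀ * (Q * Matrix.diagonal lam))) * Qᵀ).trace := by
            simp only [Matrix.mul_assoc]
        _ = (Qᵀ * (V * (Vᵀ * (Q * Matrix.diagonal lam)))).trace := Matrix.trace_mul_comm _ _
        _ = ((Mᵀ * M) * Matrix.diagonal lam).trace := by
            rw [hM, Matrix.transpose_mul, Matrix.transpose_transpose]
            simp only [Matrix.mul_assoc]
        _ = ∑ m : Fin d, lam m * (Mᵀ * M) m m := by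
            simp only [Matrix.trace, Matrix.diag, Matrix.mul_diagonal]
            apply Finset.sum_congr rfl; intro m _; ring
    set c₀ : Fin d → ℝ := fun m => (Mᵀ * M) m m with hc₀
    have hc00 : ∀ m, 0 ≤ c₀ m := by
      intro m
      simp only [hc₀, Matrix.mul_apply, Matrix.transpose_apply]
      exact Finset.sum_nonneg fun j _ => mul_self_nonneg _
    have hsymmMM : ∀ a b, (Mᵀ * M) a b = (Mᵀ * M) b a := by
      intro a b
      simp only [Matrix.mul_apply, Matrix.transpose_apply]
      apply Finset.sum_congr rfl; intro j _; ring
    have hidem : (Mᵀ * M) * (Mᵀ * M) = Mᵀ * M := by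
      calc (Mᵀ * M) * (Mᵀ * M) = Mᵀ * (M * Mᵀ) * M := by simp only [Matrix.mul_assoc]
        _ = Mᵀ * M := by rw [hMM, Matrix.mul_one]
    have hc01 : ∀ m, c₀ m ≤ 1 := by
      intro m
      have hsq : c₀ m = ∑ j, ((Mᵀ * M) m j) ^ 2 := by
        show (Mᵀ * M) m m = _
        rw [show (Mᵀ * M) m m = ((Mᵀ * M) * (Mᵀ * M)) m m by rw [hidem]]
        rw [Matrix.mul_apply]
        apply Finset.sum_congr rfl; intro j _
        rw [hsymmMM j m]; ring
      have hge : c₀ m ^ 2 ≤ c₀ m := by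
        conv_rhs => rw [hsq]
        exact Finset.single_le_sum (f := fun j => ((Mᵀ * M) m j) ^ 2)
          (fun j _ => sq_nonneg _) (Finset.mem_univ m)
      nlinarith [hc00 m]
    have hcsum : ∑ m, c₀ m = (k : ℝ) := by
      have : ∑ m, c₀ m = (Mᵀ * M).trace := rfl
      rw [this, Matrix.trace_mul_comm, hMM, Matrix.trace_one]
      simp
    -- sorting
    set σ := Tuple.sort (fun m => -lam m) with hσ
    set ν : Fin d → ℝ := fun m => lam (σ m) with hν
    set c : Fin d → ℝ := fun m => c₀ (σ m) with hc
    have hνanti : Antitone ν := by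
      intro a b hab
      have := Tuple.monotone_sort (fun m => -lam m) hab
      simp only [Function.comp_apply] at this
      simp only [hν]
      linarith
    have hreindex : ∑ m, lam m * c₀ m = ∑ m, ν m * c m := by
      rw [← Equiv.sum_comp σ (fun m => lam m * c₀ m)]
    have hcsum' : ∑ m, c m = (k : ℝ) := by
      show ∑ m, c₀ (σ m) = (k : ℝ)
      rw [Equiv.sum_comp σ c₀]; exact hcsum
    have hlp := lp_bound hk hk0 ν c hνanti (fun m => hc00 _) (fun m => hc01 _) hcsum'
    -- step B : ν m ≤ μ ⟨m, _⟩ for m < k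
    have hB : ∀ m : Fin d, ∀ hm : (m : ℕ) < k, ν m ≤ μ ⟨(m : ℕ), hm⟩ := by
      intro m hm
      have hm1 : (m : ℕ) + 1 ≤ d := m.isLt
      apply stepB (n := (m : ℕ)) S (ν m) (μ ⟨(m : ℕ), hm⟩)
        (fun j => w (σ (Fin.castLE hm1 j)))
        (w.orthonormal.comp _ ((Equiv.injective σ).comp (Fin.castLE_injective hm1)))
        (fun j => lam (σ (Fin.castLE hm1 j)))
        (fun j => hνanti (show Fin.castLE hm1 j ≤ m by
          rw [Fin.le_def]; simpa using Nat.lt_succ_iff.mp j.isLt))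
        (fun j => heig _)
        (fun j => (EuclideanSpace.equiv (Fin d) ℝ).symm
          (u ⟨(j : ℕ), lt_trans j.isLt hm⟩))
      intro x hxorth
      -- x is fixed by P m
      have hfix : P (m : ℕ) *ᵥ (x : Fin d → ℝ) = x := by
        rw [hPsum (m : ℕ) (le_of_lt hm)]
        have hdot : ∀ j ∈ Finset.univ.filter (fun j : Fin k => (j : ℕ) < (m : ℕ)),
            u j ⬝ᵥ (x : Fin d → ℝ) = 0 := by
          intro j hj
          have hjm : (j : ℕ) < (m : ℕ) := (Finset.mem_filter.mp hj).2
          have horth := hxorth ⟨(j : ℕ), hjm⟩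
          rw [← horth, ← dot_eq_inner]
          congr 1
        have hzero : (∑ j ∈ Finset.univ.filter (fun j : Fin k => (j : ℕ) < (m : ℕ)),
            vecMulVec (u j) (u j)) *ᵥ (x : Fin d → ℝ) = 0 := by
          ext a
          simp only [Matrix.mulVec, dotProduct, Matrix.sum_apply, Matrix.vecMulVec_apply,
            Pi.zero_apply, Finset.sum_mul]
          rw [Finset.sum_comm]
          apply Finset.sum_eq_zero
          intro j hj
          have hd := hdot j hj
          rw [show ∑ b, u j a * u j b * x b = u j a * (u j ⬝ᵥ (x : Fin d → ℝ)) by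
            rw [dotProduct, Finset.mul_sum]; apply Finset.sum_congr rfl; intro b _; ring]
          rw [hd, mul_zero]
        rw [Matrix.sub_mulVec, Matrix.one_mulVec, hzero, sub_zero]
      have hPm : (m : ℕ) ≤ k := le_of_lt hm
      have hquadx : (x : Fin d → ℝ) ⬝ᵥ (S *ᵥ (x : Fin d → ℝ))
          = (x : Fin d → ℝ) ⬝ᵥ ((P (m : ℕ) * S * P (m : ℕ)) *ᵥ (x : Fin d → ℝ)) := by
        have hstep : (P (m : ℕ) * S * P (m : ℕ)) *ᵥ (x : Fin d → ℝ)
            = P (m : ℕ) *ᵥ (S *ᵥ (x : Fin d → ℝ)) := by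
          rw [← Matrix.mulVec_mulVec, ← Matrix.mulVec_mulVec, hfix]
        rw [hstep]
        have hvm : (x : Fin d → ℝ) ᵥ* P (m : ℕ) = (x : Fin d → ℝ) := by
          conv_lhs => rw [← hPsymm (m : ℕ) hPm]
          rw [Matrix.vecMul_transpose, hfix]
        conv_rhs => rw [Matrix.dotProduct_mulVec, hvm]
      rw [hquadx]
      exact quad_le_opNorm _ x
    -- final assembly
    have hfinal : ∑ m ∈ Finset.univ.filter (fun m : Fin d => (m : ℕ) < k), ν m
        ≤ ∑ i : Fin k, μ i := by
      set μ' : Fin d → ℝ := fun m => if hm : (m : ℕ) < k then μ ⟨(m : ℕ), hm⟩ else 0 with hμ'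
      have hre : ∑ i : Fin k, μ i
          = ∑ m ∈ Finset.univ.filter (fun m : Fin d => (m : ℕ) < k), μ' m := by
        apply Finset.sum_nbij' (fun i : Fin k => Fin.castLE hk i)
          (fun m : Fin d => ⟨(m : ℕ) % k, Nat.mod_lt _ hk0⟩)
        · intro a _; simp [a.isLt]
        · intro a _; simp
        · intro a _; ext; simp [Nat.mod_eq_of_lt a.isLt]
        · intro a ha
          have := (Finset.mem_filter.mp ha).2
          ext; simp [Nat.mod_eq_of_lt this]
        · intro a _
          simp only [hμ']
          rw [dif_pos (show ((Fin.castLE hk a : Fin d) : ℕ) < k from a.isLt)]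
          congr 1
      rw [hre]
      apply Finset.sum_le_sum
      intro m hm
      have hmk := (Finset.mem_filter.mp hm).2
      have := hB m hmk
      simp only [hμ']
      rw [dif_pos hmk]
      exact this
    calc ((V * Vᵀ)ᵀ * S).trace = ∑ m, lam m * c₀ m := htr
      _ = ∑ m, ν m * c m := hreindex
      _ ≤ ∑ m ∈ Finset.univ.filter (fun m : Fin d => (m : ℕ) < k), ν m := hlp
      _ ≤ ∑ i : Fin k, μ i := hfinal
  -- conclude
  have hsup : sSup {x : ℝ | ∃ V : Matrix (Fin d) (Fin k) ℝ,
      Vᵀ * V = 1 ∧ x = ((V * Vᵀ)ᵀ * S).trace} ≤ ∑ i : Fin k, μ i :=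
    Real.sSup_le h3 (Finset.sum_nonneg fun i _ => hμ0 i)
  calc (1 - ζ ^ 2) * sSup {x : ℝ | ∃ V : Matrix (Fin d) (Fin k) ℝ,
      Vᵀ * V = 1 ∧ x = ((V * Vᵀ)ᵀ * S).trace}
      ≤ (1 - ζ ^ 2) * ∑ i : Fin k, μ i := by
        exact mul_le_mul_of_nonneg_left hsup (le_of_lt hz)
    _ = ∑ i : Fin k, (1 - ζ ^ 2) * μ i := Finset.mul_sum _ _ _
    _ ≤ ∑ i : Fin k, u i ⬝ᵥ (S *ᵥ u i) := Finset.sum_le_sum fun i _ => h2 i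
    _ = ((U * Uᵀ)ᵀ * S).trace := h1.symm
end

section
/- Let Σ be a d×d real symmetric PSD matrix with eigenvalues λ_1 ≥ … ≥ λ_d, eigengap Δ_k := λ_k − λ_{k+1}, and top-k eigenvector matrix V_k ∈ ℝ^{d×k} (orthonormal columns of eigenvectors for λ_1,…,λ_k). Let U ∈ ℝ^{d×k} have orthonormal columns, let γ ≥ 0 satisfy ‖U Uᵀ − V_k V_kᵀ‖_F² ≥ γ, and define ζ ≥ 0 by ⟨U Uᵀ, Σ⟩ = (1 − ζ²)·⟨V_k V_kᵀ, Σ⟩. Then ζ² ≥ γ·Δ_k / (2·(λ_1 + ⋯ + λ_k)). -/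
open Matrix

/-- Squared Frobenius norm of a real matrix. -/
noncomputable def frobSq {m n : ℕ} (A : Matrix (Fin m) (Fin n) ℝ) : ℝ :=
  ∑ i, ∑ j, (A i j) ^ 2

lemma sum_if_lt {d k : ℕ} (hkd : k ≤ d) (f : Fin d → ℝ) :
    ∑ i : Fin d, (if (i : ℕ) < k then f i else 0) = ∑ j : Fin k, f (Fin.castLE hkd j) := by
  rw [Finset.sum_ite, Finset.sum_const_zero, add_zero]
  refine Finset.sum_bij' (fun i hi => (⟨(i : ℕ), by simpa using hi⟩ : Fin k))
    (fun j _ => Fin.castLE hkd j) ?_ ?_ ?_ ?_ ?_ <;> simp [Fin.ext_iff]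

lemma frobSq_eq_trace {n : ℕ} (A : Matrix (Fin n) (Fin n) ℝ) :
    frobSq A = (Aᵀ * A).trace := by
  simp only [frobSq, Matrix.trace, Matrix.diag_apply, Matrix.mul_apply,
    Matrix.transpose_apply, sq]
  exact Finset.sum_comm

/-- **Reduction to Frobenius norm.**
Let `S` be `d × d` symmetric PSD with eigenvalues `μ 0 ≥ … ≥ μ (d-1)` (via an
orthogonal eigendecomposition with nonincreasing, nonnegative `μ`), eigengap
`Δ_k = μ (k-1) - μ k` (0-based; `λ_k - λ_{k+1}` in 1-based notation), and top-`k`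
eigenvector matrix `V` (the first `k` columns of `Q`).  If `U` has orthonormal
columns, `‖U Uᵀ - V Vᵀ‖_F² ≥ γ` with `γ ≥ 0`, and `ζ ≥ 0` satisfies
`⟨U Uᵀ, S⟩ = (1 - ζ²) ⟨V Vᵀ, S⟩`, then `ζ² ≥ γ Δ_k / (2 (λ_1 + ⋯ + λ_k))`. -/
theorem reduction_to_frobenius_norm {d k : ℕ} (hk1 : 1 ≤ k) (hkd : k < d)
    (S Q : Matrix (Fin d) (Fin d) ℝ) (μ : Fin d → ℝ)
    (hQ : Qᵀ * Q = 1) (hdecomp : S = Q * Matrix.diagonal μ * Qᵀ)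
    (hmono : ∀ i j : Fin d, i ≤ j → μ j ≤ μ i)
    (hpos : ∀ i, 0 ≤ μ i)
    (V : Matrix (Fin d) (Fin k) ℝ)
    (hV : ∀ (i : Fin d) (j : Fin k), V i j = Q i (Fin.castLE hkd.le j))
    (U : Matrix (Fin d) (Fin k) ℝ) (hU : Uᵀ * U = 1)
    (γ : ℝ) (hγ : 0 ≤ γ) (hfrob : γ ≤ frobSq (U * Uᵀ - V * Vᵀ))
    (ζ : ℝ) (hζ : 0 ≤ ζ)
    (hzeta : ((U * Uᵀ)ᵀ * S).trace = (1 - ζ ^ 2) * ((V * Vᵀ)ᵀ * S).trace) :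
    γ * (μ ⟨k - 1, by omega⟩ - μ ⟨k, hkd⟩) /
      (2 * ∑ i : Fin k, μ (Fin.castLE hkd.le i)) ≤ ζ ^ 2 := by
  have hQQ : Q * Qᵀ = 1 := mul_eq_one_comm.mp hQ
  set W : Matrix (Fin d) (Fin k) ℝ := Qᵀ * U with hWdef
  have hWO : Wᵀ * W = 1 := by
    rw [hWdef, Matrix.transpose_mul, Matrix.transpose_transpose]
    calc Uᵀ * Q * (Qᵀ * U) = Uᵀ * (Q * Qᵀ) * U := by
          simp [Matrix.mul_assoc]
      _ = 1 := by rw [hQQ, Matrix.mul_one, hU]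
  set p : Fin d → ℝ := fun i => ∑ j, (W i j) ^ 2 with hpdef
  have hQe : ∀ i j : Fin d, ∑ l, Q l i * Q l j = if i = j then (1 : ℝ) else 0 := by
    intro i j
    have h := congrFun (congrFun hQ i) j
    simpa [Matrix.mul_apply, Matrix.one_apply, Matrix.transpose_apply] using h
  have hWe : ∀ j j' : Fin k, ∑ i, W i j * W i j' = if j = j' then (1 : ℝ) else 0 := by
    intro j j'
    have h := congrFun (congrFun hWO j) j'
    simpa [Matrix.mul_apply, Matrix.one_apply, Matrix.transpose_apply] using h
  have hp0 : ∀ i, 0 ≤ p i := fun i => Finset.sum_nonneg fun j _ => sq_nonneg _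
  have hpsum : ∑ i, p i = (k : ℝ) := by
    rw [hpdef, Finset.sum_comm]
    have h1 : ∀ j : Fin k, ∑ i, (W i j) ^ 2 = 1 := by
      intro j; simpa [sq] using hWe j j
    simp [h1]
  have hMii : ∀ i, (W * Wᵀ) i i = p i := by
    intro i
    simp [Matrix.mul_apply, Matrix.transpose_apply, hpdef, sq]
  have hM : (W * Wᵀ) * (W * Wᵀ) = W * Wᵀ := by
    calc (W * Wᵀ) * (W * Wᵀ) = W * (Wᵀ * W) * Wᵀ := by simp [Matrix.mul_assoc]
      _ = W * Wᵀ := by rw [hWO, Matrix.mul_one]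
  have hp1 : ∀ i, p i ≤ 1 := by
    intro i
    have h2 : (W * Wᵀ) i i = ∑ j, ((W * Wᵀ) i j) ^ 2 := by
      conv_lhs => rw [← hM]
      rw [Matrix.mul_apply]
      congr 1; ext j
      have hsym : (W * Wᵀ) j i = (W * Wᵀ) i j := by
        rw [Matrix.mul_apply, Matrix.mul_apply]
        simp [Matrix.transpose_apply, mul_comm]
      rw [hsym, sq]
    have h3 : ((W * Wᵀ) i i) ^ 2 ≤ ∑ j, ((W * Wᵀ) i j) ^ 2 :=
      Finset.single_le_sum (f := fun j => ((W * Wᵀ) i j) ^ 2)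
        (fun j _ => sq_nonneg _) (Finset.mem_univ i)
    nlinarith [hp0 i, hMii i, h2, h3]
  -- trace of U U^T S
  have traceU : ((U * Uᵀ)ᵀ * S).trace = ∑ i, p i * μ i := by
    rw [hdecomp]
    have h1 : (U * Uᵀ)ᵀ * (Q * Matrix.diagonal μ * Qᵀ)
        = (U * Uᵀ * Q * Matrix.diagonal μ) * Qᵀ := by
      simp [Matrix.transpose_mul, Matrix.mul_assoc]
    rw [h1, Matrix.trace_mul_comm]
    have h2 : Qᵀ * (U * Uᵀ * Q * Matrix.diagonal μ)
        = (W * Wᵀ) * Matrix.diagonal μ := by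
      rw [hWdef]
      simp [Matrix.transpose_mul, Matrix.mul_assoc]
    rw [h2, Matrix.trace]
    simp [Matrix.mul_diagonal, hMii]
  -- trace of V V^T S
  have hJe : ∀ (i : Fin d) (j : Fin k),
      (Qᵀ * V) i j = if i = Fin.castLE hkd.le j then (1 : ℝ) else 0 := by
    intro i j
    rw [Matrix.mul_apply]
    simp only [Matrix.transpose_apply, hV]
    exact hQe i (Fin.castLE hkd.le j)
  have hJJ : ∀ i : Fin d, ((Qᵀ * V) * (Qᵀ * V)ᵀ) i i = if (i : ℕ) < k then (1 : ℝ) else 0 := by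
    intro i
    rw [Matrix.mul_apply]
    simp only [Matrix.transpose_apply, hJe]
    by_cases h : (i : ℕ) < k
    · rw [if_pos h, Finset.sum_eq_single (⟨(i : ℕ), h⟩ : Fin k)]
      · simp [Fin.ext_iff]
      · intro j _ hj
        have hne : i ≠ Fin.castLE hkd.le j := by
          intro he; apply hj; apply Fin.ext; simpa [Fin.ext_iff] using he.symm
        simp [hne]
      · simp
    · rw [if_neg h, Finset.sum_eq_zero]
      intro j _
      have hne : i ≠ Fin.castLE hkd.le j := by
        intro he; exact h (he ▸ j.isLt)
      simp [hne]
  have traceV : ((V * Vᵀ)ᵀ * S).trace = ∑ i : Fin d, (if (i : ℕ) < k then μ i else 0) := by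
    rw [hdecomp]
    have h1 : (V * Vᵀ)ᵀ * (Q * Matrix.diagonal μ * Qᵀ)
        = (V * Vᵀ * Q * Matrix.diagonal μ) * Qᵀ := by
      simp [Matrix.transpose_mul, Matrix.mul_assoc]
    rw [h1, Matrix.trace_mul_comm]
    have h2 : Qᵀ * (V * Vᵀ * Q * Matrix.diagonal μ)
        = ((Qᵀ * V) * (Qᵀ * V)ᵀ) * Matrix.diagonal μ := by
      simp [Matrix.transpose_mul, Matrix.mul_assoc]
    rw [h2, Matrix.trace]
    simp only [Matrix.diag_apply, Matrix.mul_diagonal, hJJ]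
    apply Finset.sum_congr rfl
    intro i _
    by_cases h : (i : ℕ) < k <;> simp [h]
  -- orthonormality of V
  have hVO : Vᵀ * V = 1 := by
    ext j j'
    rw [Matrix.mul_apply]
    simp only [Matrix.transpose_apply, hV]
    rw [hQe]
    simp [Matrix.one_apply, Fin.castLE_inj]
  -- Frobenius norm identity
  have hX : ∀ (j j' : Fin k), (Vᵀ * U) j j' = W (Fin.castLE hkd.le j) j' := by
    intro j j'
    rw [hWdef, Matrix.mul_apply, Matrix.mul_apply]
    simp [Matrix.transpose_apply, hV]
  have trPV : (U * Uᵀ * (V * Vᵀ)).trace = ∑ j : Fin k, p (Fin.castLE hkd.le j) := by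
    have h1 : U * Uᵀ * (V * Vᵀ) = (U * (Uᵀ * V)) * Vᵀ := by
      simp [Matrix.mul_assoc]
    rw [h1, Matrix.trace_mul_comm]
    have h2 : Vᵀ * (U * (Uᵀ * V)) = (Vᵀ * U) * (Vᵀ * U)ᵀ := by
      simp [Matrix.transpose_mul, Matrix.mul_assoc]
    rw [h2, Matrix.trace]
    simp only [Matrix.diag_apply, Matrix.mul_apply, Matrix.transpose_apply, hX, hpdef]
    apply Finset.sum_congr rfl
    intro j _
    apply Finset.sum_congr rfl
    intro j' _
    ring
  have trPP : (U * Uᵀ * (U * Uᵀ)).trace = (k : ℝ) := by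
    have h1 : U * Uᵀ * (U * Uᵀ) = U * (Uᵀ * U) * Uᵀ := by simp [Matrix.mul_assoc]
    rw [h1, hU, Matrix.mul_one, Matrix.trace_mul_comm, hU, Matrix.trace_one]
    simp
  have trVV : (V * Vᵀ * (V * Vᵀ)).trace = (k : ℝ) := by
    have h1 : V * Vᵀ * (V * Vᵀ) = V * (Vᵀ * V) * Vᵀ := by simp [Matrix.mul_assoc]
    rw [h1, hVO, Matrix.mul_one, Matrix.trace_mul_comm, hVO, Matrix.trace_one]
    simp
  have trVP : (V * Vᵀ * (U * Uᵀ)).trace = ∑ j : Fin k, p (Fin.castLE hkd.le j) := by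
    rw [Matrix.trace_mul_comm]; exact trPV
  have hfrobEq : frobSq (U * Uᵀ - V * Vᵀ)
      = 2 * ((k : ℝ) - ∑ j : Fin k, p (Fin.castLE hkd.le j)) := by
    rw [frobSq_eq_trace]
    have hT : (U * Uᵀ - V * Vᵀ)ᵀ = U * Uᵀ - V * Vᵀ := by
      simp [Matrix.transpose_sub, Matrix.transpose_mul]
    rw [hT]
    have hexp : (U * Uᵀ - V * Vᵀ) * (U * Uᵀ - V * Vᵀ)
        = (U * Uᵀ * (U * Uᵀ) - U * Uᵀ * (V * Vᵀ)) -
          (V * Vᵀ * (U * Uᵀ) - V * Vᵀ * (V * Vᵀ)) := by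
      rw [Matrix.sub_mul, Matrix.mul_sub, Matrix.mul_sub]
    rw [hexp, Matrix.trace_sub, Matrix.trace_sub, Matrix.trace_sub,
      trPP, trVV, trPV, trVP]
    ring
  -- the key quantities
  set T : ℝ := ∑ j : Fin k, μ (Fin.castLE hkd.le j) with hTdef
  set e : Fin d → ℝ := fun i => if (i : ℕ) < k then 1 else 0 with hedef
  set q : Fin d → ℝ := fun i => e i - p i with hqdef
  have hesum : ∑ i, e i = (k : ℝ) := by
    rw [hedef]
    rw [sum_if_lt hkd.le (fun _ => (1 : ℝ))]
    simp
  have hqsum : ∑ i, q i = 0 := by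
    simp [hqdef, Finset.sum_sub_distrib, hesum, hpsum]
  set s : ℝ := ∑ i, e i * q i with hsdef
  have hs0 : 0 ≤ s := by
    apply Finset.sum_nonneg
    intro i _
    by_cases h : (i : ℕ) < k
    · have : q i = 1 - p i := by simp [hqdef, hedef, h]
      simp [hedef, h, this]
      linarith [hp1 i]
    · simp [hedef, h]
  have hps : ∑ j : Fin k, p (Fin.castLE hkd.le j) = (k : ℝ) - s := by
    have h1 : s = ∑ i, (e i * e i - e i * p i) := by
      rw [hsdef]
      apply Finset.sum_congr rfl
      intro i _
      simp only [hqdef]; ring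
    have h2 : ∀ i, e i * e i = e i := by
      intro i; by_cases h : (i : ℕ) < k <;> simp [hedef, h]
    have h3 : ∑ i, e i * p i = ∑ j : Fin k, p (Fin.castLE hkd.le j) := by
      rw [← sum_if_lt hkd.le p]
      apply Finset.sum_congr rfl
      intro i _
      by_cases h : (i : ℕ) < k <;> simp [hedef, h]
    rw [h1, Finset.sum_sub_distrib, h3] at *
    simp only [h2] at h1 ⊢
    have := hesum
    linarith [hesum]
  -- γ ≤ 2 s
  have hγs : γ ≤ 2 * s := by
    rw [hfrobEq, hps] at hfrob
    linarith
  -- trace V = T and = ∑ e μ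
  have hTe : ∑ i, e i * μ i = T := by
    rw [hTdef, ← sum_if_lt hkd.le μ]
    apply Finset.sum_congr rfl
    intro i _
    by_cases h : (i : ℕ) < k <;> simp [hedef, h]
  have traceV' : ((V * Vᵀ)ᵀ * S).trace = T := by
    rw [traceV, ← hTe]
    apply Finset.sum_congr rfl
    intro i _
    by_cases h : (i : ℕ) < k <;> simp [hedef, h]
  -- ζ² T = ∑ μ q
  have hζT : ζ ^ 2 * T = ∑ i, μ i * q i := by
    have h1 : ∑ i, μ i * q i = ∑ i, e i * μ i - ∑ i, p i * μ i := by
      rw [← Finset.sum_sub_distrib]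
      apply Finset.sum_congr rfl
      intro i _
      simp only [hqdef]; ring
    rw [h1, hTe, ← traceU, hzeta, traceV']
    ring
  -- key lower bound
  set a : Fin d := ⟨k - 1, by omega⟩ with hadef
  set b : Fin d := ⟨k, hkd⟩ with hbdef
  have hab : μ b ≤ μ a := hmono a b (by simp only [hadef, hbdef, Fin.mk_le_mk]; omega)
  have hkey : (μ a - μ b) * s ≤ ∑ i, μ i * q i := by
    have hlow : ∀ i : Fin d, (if (i : ℕ) < k then μ a else μ b) * q i ≤ μ i * q i := by
      intro i
      by_cases h : (i : ℕ) < k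
      · rw [if_pos h]
        have hq : 0 ≤ q i := by
          have : q i = 1 - p i := by simp [hqdef, hedef, h]
          rw [this]; linarith [hp1 i]
        have hμ : μ a ≤ μ i := hmono i a (by simp [hadef, Fin.le_def]; omega)
        exact mul_le_mul_of_nonneg_right hμ hq
      · rw [if_neg h]
        have hq : q i ≤ 0 := by
          have : q i = - p i := by simp [hqdef, hedef, h]
          rw [this]; linarith [hp0 i]
        have hμ : μ i ≤ μ b := hmono b i (by simp [hbdef, Fin.le_def]; omega)
        exact mul_le_mul_of_nonpos_right hμ hq
    have hsum : ∑ i : Fin d, (if (i : ℕ) < k then μ a else μ b) * q i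
        = μ a * s + μ b * ((∑ i : Fin d, q i) - s) := by
      have : ∀ i : Fin d, (if (i : ℕ) < k then μ a else μ b) * q i
          = μ a * (e i * q i) + μ b * (q i - e i * q i) := by
        intro i
        by_cases h : (i : ℕ) < k <;> simp [hedef, h] <;> ring
      rw [Finset.sum_congr rfl (fun i _ => this i), Finset.sum_add_distrib,
        ← Finset.mul_sum, ← Finset.mul_sum, ← hsdef, Finset.sum_sub_distrib, ← hsdef]
    calc (μ a - μ b) * s = μ a * s + μ b * (∑ i, q i - s) := by
          rw [hqsum]; ring
      _ = ∑ i : Fin d, (if (i : ℕ) < k then μ a else μ b) * q i := hsum.symm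
      _ ≤ ∑ i, μ i * q i := Finset.sum_le_sum fun i _ => hlow i
  -- finish
  have hT0 : 0 ≤ T := Finset.sum_nonneg fun j _ => hpos _
  have hmain : (μ a - μ b) * (γ / 2) ≤ ζ ^ 2 * T := by
    rw [hζT]
    calc (μ a - μ b) * (γ / 2) ≤ (μ a - μ b) * s := by
          apply mul_le_mul_of_nonneg_left _ (by linarith)
          linarith
      _ ≤ ∑ i, μ i * q i := hkey
  rcases eq_or_lt_of_le hT0 with hTz | hTpos
  · rw [← hTz]
    simp
    positivity
  · rw [div_le_iff₀ (by linarith)]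
    have hre : γ * (μ a - μ b) = 2 * ((μ a - μ b) * (γ / 2)) := by ring
    rw [hre]
    linarith [hmain]
end

section
/- Let Σ be a d×d real symmetric PSD matrix with eigenvalues λ_1 ≥ λ_2 ≥ … ≥ λ_d and top eigenvector v_1 (unit eigenvector for λ_1). Let u be a unit vector with sin²θ ≤ ξ, where θ is the angle between u and v_1, and set P = I_d − u uᵀ. Let λ̃_1 ≥ … ≥ λ̃_{d} denote the eigenvalues of P Σ P. Then for every i, |λ̃_i − λ_{i+1}| ≤ Δ, where Δ = 8·λ_1·√ξ·(1 + √ξ); in particular λ_{i+1} − Δ ≤ λ̃_i ≤ λ_{i+1} + Δ. -/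
open Matrix

namespace EigenDeflAux

variable {d : ℕ}

lemma dot_self_nonneg (a : Fin d → ℝ) : 0 ≤ a ⬝ᵥ a :=
  Finset.sum_nonneg fun i _ => mul_self_nonneg _

noncomputable def nrm (a : Fin d → ℝ) : ℝ := Real.sqrt (a ⬝ᵥ a)

lemma nrm_nonneg (a : Fin d → ℝ) : 0 ≤ nrm a := Real.sqrt_nonneg _

lemma nrm_sq (a : Fin d → ℝ) : nrm a ^ 2 = a ⬝ᵥ a := Real.sq_sqrt (dot_self_nonneg a)

lemma abs_dot_le (a b : Fin d → ℝ) : |a ⬝ᵥ b| ≤ nrm a * nrm b := by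
  have h := Finset.sum_mul_sq_le_sq_mul_sq Finset.univ a b
  have : (a ⬝ᵥ b)^2 ≤ (a ⬝ᵥ a) * (b ⬝ᵥ b) := by
    simpa [dotProduct, pow_two] using h
  have h2 : |a ⬝ᵥ b| = Real.sqrt ((a ⬝ᵥ b)^2) := (Real.sqrt_sq_eq_abs _).symm
  rw [h2, nrm, nrm, ← Real.sqrt_mul (dot_self_nonneg a)]
  exact Real.sqrt_le_sqrt this

lemma sum_abs_mul_le (a b : Fin d → ℝ) : ∑ i, |a i| * |b i| ≤ nrm a * nrm b := by
  have h := Finset.sum_mul_sq_le_sq_mul_sq Finset.univ (fun i => |a i|) (fun i => |b i|)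
  simp only [sq_abs] at h
  have h1 : (∑ i, |a i| * |b i|)^2 ≤ (a ⬝ᵥ a) * (b ⬝ᵥ b) := by
    simpa [dotProduct, pow_two] using h
  have h0 : 0 ≤ ∑ i, |a i| * |b i| :=
    Finset.sum_nonneg fun i _ => mul_nonneg (abs_nonneg _) (abs_nonneg _)
  calc ∑ i, |a i| * |b i| = Real.sqrt ((∑ i, |a i| * |b i|)^2) := (Real.sqrt_sq h0).symm
    _ ≤ Real.sqrt ((a ⬝ᵥ a) * (b ⬝ᵥ b)) := Real.sqrt_le_sqrt h1
    _ = nrm a * nrm b := Real.sqrt_mul (dot_self_nonneg a) _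

lemma nrm_add_le (a b : Fin d → ℝ) : nrm (a + b) ≤ nrm a + nrm b := by
  have hab : a ⬝ᵥ b ≤ nrm a * nrm b := le_trans (le_abs_self _) (abs_dot_le a b)
  have : (a+b) ⬝ᵥ (a+b) ≤ (nrm a + nrm b)^2 := by
    have ha := nrm_sq a; have hb := nrm_sq b
    have : (a+b) ⬝ᵥ (a+b) = a ⬝ᵥ a + 2 * (a ⬝ᵥ b) + b ⬝ᵥ b := by
      simp [add_dotProduct, dotProduct_add, dotProduct_comm b a]; ring
    rw [this]; nlinarith
  calc nrm (a+b) = Real.sqrt ((a+b)⬝ᵥ(a+b)) := rfl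
    _ ≤ Real.sqrt ((nrm a + nrm b)^2) := Real.sqrt_le_sqrt this
    _ = nrm a + nrm b := Real.sqrt_sq (add_nonneg (nrm_nonneg a) (nrm_nonneg b))

lemma nrm_smul (t : ℝ) (a : Fin d → ℝ) : nrm (t • a) = |t| * nrm a := by
  rw [nrm, smul_dotProduct, dotProduct_smul, smul_eq_mul, smul_eq_mul, ← mul_assoc,
    Real.sqrt_mul (mul_self_nonneg t), nrm, ← Real.sqrt_mul_self_eq_abs]

lemma nrm_le_of_sq_le {a : Fin d → ℝ} {c : ℝ} (hc : 0 ≤ c) (h : a ⬝ᵥ a ≤ c^2) : nrm a ≤ c := by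
  calc nrm a ≤ Real.sqrt (c^2) := Real.sqrt_le_sqrt h
    _ = c := Real.sqrt_sq hc



lemma dot_mm (M N : Matrix (Fin d) (Fin d) ℝ) (a b : Fin d → ℝ) :
    (M *ᵥ a) ⬝ᵥ (N *ᵥ b) = a ⬝ᵥ ((Mᵀ * N) *ᵥ b) := by
  rw [Matrix.dotProduct_mulVec a, ← Matrix.vecMul_vecMul, Matrix.dotProduct_mulVec,
    ← Matrix.vecMul_transpose]

lemma dot_mulVec_left' (M : Matrix (Fin d) (Fin d) ℝ) (a b : Fin d → ℝ) :
    a ⬝ᵥ (M *ᵥ b) = (Mᵀ *ᵥ a) ⬝ᵥ b := by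
  rw [Matrix.dotProduct_mulVec, ← Matrix.vecMul_transpose, Matrix.transpose_transpose]

lemma vmv_transpose (w : Fin d → ℝ) : (vecMulVec w w)ᵀ = vecMulVec w w := by
  ext i j; simp [vecMulVec_apply, mul_comm]

lemma vmv_mulVec (w x : Fin d → ℝ) : vecMulVec w w *ᵥ x = (w ⬝ᵥ x) • w := by
  funext i
  simp only [Matrix.mulVec, dotProduct, vecMulVec_apply, Pi.smul_apply, smul_eq_mul,
    Finset.sum_mul]
  rw [Finset.sum_congr rfl (fun j _ => by ring : ∀ j ∈ Finset.univ,
    w i * w j * x j = w j * x j * w i)]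

lemma nrm_orth (Q : Matrix (Fin d) (Fin d) ℝ) (hQQt : Q * Qᵀ = 1) (a : Fin d → ℝ) :
    nrm (Qᵀ *ᵥ a) = nrm a := by
  rw [nrm, nrm, dot_mm, Matrix.transpose_transpose, hQQt, Matrix.one_mulVec]

lemma quadS_bound (hd : 0 < d) (S Q : Matrix (Fin d) (Fin d) ℝ) (μ : Fin d → ℝ)
    (hQ : Qᵀ * Q = 1) (hS : S = Q * Matrix.diagonal μ * Qᵀ)
    (hμmono : ∀ i j : Fin d, i ≤ j → μ j ≤ μ i) (hμpos : ∀ i, 0 ≤ μ i)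
    (a b : Fin d → ℝ) :
    |a ⬝ᵥ (S *ᵥ b)| ≤ μ ⟨0, hd⟩ * nrm a * nrm b := by
  have hQQt : Q * Qᵀ = 1 := mul_eq_one_comm.mp hQ
  set a' : Fin d → ℝ := Qᵀ *ᵥ a with ha'
  set b' : Fin d → ℝ := Qᵀ *ᵥ b with hb'
  have hquad : a ⬝ᵥ (S *ᵥ b) = ∑ j, a' j * (μ j * b' j) := by
    rw [hS]
    have h1 : (Q * Matrix.diagonal μ * Qᵀ) *ᵥ b = Q *ᵥ (Matrix.diagonal μ *ᵥ b') := by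
      rw [hb', Matrix.mulVec_mulVec, Matrix.mulVec_mulVec, Matrix.mul_assoc]
    rw [h1, dot_mulVec_left', ← ha', dotProduct]
    exact Finset.sum_congr rfl fun j _ => by rw [Matrix.mulVec_diagonal]
  rw [hquad]
  have h2 : |∑ j, a' j * (μ j * b' j)| ≤ ∑ j, μ j * (|a' j| * |b' j|) := by
    refine le_trans (Finset.abs_sum_le_sum_abs _ _) (Finset.sum_le_sum fun j _ => ?_)
    rw [abs_mul, abs_mul, abs_of_nonneg (hμpos j)]
    ring_nf
    exact le_of_eq (by ring)
  have h3 : ∑ j, μ j * (|a' j| * |b' j|) ≤ μ ⟨0, hd⟩ * ∑ j, |a' j| * |b' j| := by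
    rw [Finset.mul_sum]
    refine Finset.sum_le_sum fun j _ => ?_
    exact mul_le_mul_of_nonneg_right (hμmono ⟨0, hd⟩ j (Fin.le_def.mpr (by simp)))
      (mul_nonneg (abs_nonneg _) (abs_nonneg _))
  have h4 : ∑ j, |a' j| * |b' j| ≤ nrm a' * nrm b' := sum_abs_mul_le a' b'
  have h5 : nrm a' = nrm a := nrm_orth Q hQQt a
  have h6 : nrm b' = nrm b := nrm_orth Q hQQt b
  have h7 : 0 ≤ μ ⟨0, hd⟩ := hμpos _
  calc |∑ j, a' j * (μ j * b' j)| ≤ μ ⟨0, hd⟩ * ∑ j, |a' j| * |b' j| := le_trans h2 h3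
    _ ≤ μ ⟨0, hd⟩ * (nrm a' * nrm b') := mul_le_mul_of_nonneg_left h4 h7
    _ = μ ⟨0, hd⟩ * nrm a * nrm b := by rw [h5, h6, mul_assoc]

lemma proj_quad (P S : Matrix (Fin d) (Fin d) ℝ) (hPt : Pᵀ = P) (x : Fin d → ℝ) :
    x ⬝ᵥ ((P * S * P) *ᵥ x) = (P *ᵥ x) ⬝ᵥ (S *ᵥ (P *ᵥ x)) := by
  have h1 : (P * S * P) *ᵥ x = P *ᵥ (S *ᵥ (P *ᵥ x)) := by
    rw [Matrix.mulVec_mulVec, Matrix.mulVec_mulVec]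
  rw [h1, dot_mulVec_left', hPt]

lemma proj_nrm (u x : Fin d → ℝ) (hu : u ⬝ᵥ u = 1) (hx : x ⬝ᵥ x = 1) :
    nrm (x - (u ⬝ᵥ x) • u) ≤ 1 := by
  apply nrm_le_of_sq_le (by norm_num)
  have : (x - (u ⬝ᵥ x) • u) ⬝ᵥ (x - (u ⬝ᵥ x) • u)
      = x ⬝ᵥ x - (u ⬝ᵥ x) * (x ⬝ᵥ u) - (u ⬝ᵥ x) * (u ⬝ᵥ x)
        + (u ⬝ᵥ x) * ((u ⬝ᵥ x) * (u ⬝ᵥ u)) := by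
    simp only [sub_dotProduct, dotProduct_sub, smul_dotProduct,
      dotProduct_smul, smul_eq_mul]
    ring
  rw [this, hx, hu, dotProduct_comm x u]
  nlinarith [sq_nonneg (u ⬝ᵥ x)]

lemma quad_diff_bound (hd : 0 < d) (S Q : Matrix (Fin d) (Fin d) ℝ) (μ : Fin d → ℝ)
    (hQ : Qᵀ * Q = 1) (hS : S = Q * Matrix.diagonal μ * Qᵀ)
    (hμmono : ∀ i j : Fin d, i ≤ j → μ j ≤ μ i) (hμpos : ∀ i, 0 ≤ μ i)
    (u v : Fin d → ℝ) (hu : u ⬝ᵥ u = 1) (hv : v ⬝ᵥ v = 1) (huv : 0 ≤ u ⬝ᵥ v)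
    (ξ : ℝ) (hangle : 1 - (u ⬝ᵥ v) ^ 2 ≤ ξ)
    (x : Fin d → ℝ) (hx : x ⬝ᵥ x = 1) :
    |x ⬝ᵥ (((1 - vecMulVec u u) * S * (1 - vecMulVec u u)) *ᵥ x)
      - x ⬝ᵥ (((1 - vecMulVec v v) * S * (1 - vecMulVec v v)) *ᵥ x)|
      ≤ 8 * μ ⟨0, hd⟩ * Real.sqrt ξ * (1 + Real.sqrt ξ) := by
  have hSt : Sᵀ = S := by
    rw [hS, Matrix.transpose_mul, Matrix.transpose_mul, Matrix.transpose_transpose,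
      Matrix.diagonal_transpose, Matrix.mul_assoc]
  have hPut : (1 - vecMulVec u u)ᵀ = 1 - vecMulVec u u := by
    rw [Matrix.transpose_sub, Matrix.transpose_one, vmv_transpose]
  have hPvt : (1 - vecMulVec v v)ᵀ = 1 - vecMulVec v v := by
    rw [Matrix.transpose_sub, Matrix.transpose_one, vmv_transpose]
  set y : Fin d → ℝ := x - (u ⬝ᵥ x) • u with hy
  set z : Fin d → ℝ := x - (v ⬝ᵥ x) • v with hz
  have hyx : (1 - vecMulVec u u) *ᵥ x = y := by
    rw [Matrix.sub_mulVec, Matrix.one_mulVec, vmv_mulVec, hy]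
  have hzx : (1 - vecMulVec v v) *ᵥ x = z := by
    rw [Matrix.sub_mulVec, Matrix.one_mulVec, vmv_mulVec, hz]
  rw [proj_quad _ _ hPut, proj_quad _ _ hPvt, hyx, hzx]
  -- symmetry of S in quadratic forms
  have hsym : z ⬝ᵥ (S *ᵥ y) = y ⬝ᵥ (S *ᵥ z) := by
    rw [dot_mulVec_left', hSt, dotProduct_comm]
  have hdiff : y ⬝ᵥ (S *ᵥ y) - z ⬝ᵥ (S *ᵥ z) = (y - z) ⬝ᵥ (S *ᵥ (y + z)) := by
    have hexp : (y - z) ⬝ᵥ (S *ᵥ (y + z))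
        = y ⬝ᵥ (S *ᵥ y) + y ⬝ᵥ (S *ᵥ z) - z ⬝ᵥ (S *ᵥ y) - z ⬝ᵥ (S *ᵥ z) := by
      simp only [sub_dotProduct, Matrix.mulVec_add, dotProduct_add]
      ring
    rw [hexp, hsym]
    ring
  rw [hdiff]
  -- bound the norms
  have hny : nrm y ≤ 1 := proj_nrm u x hu hx
  have hnz : nrm z ≤ 1 := proj_nrm v x hv hx
  have hns : nrm (y + z) ≤ 2 := le_trans (nrm_add_le y z) (by linarith)
  have hξ0 : 0 ≤ ξ := by
    have h1 : |u ⬝ᵥ v| ≤ nrm u * nrm v := abs_dot_le u v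
    have h2 : nrm u = 1 := by rw [nrm, hu, Real.sqrt_one]
    have h3 : nrm v = 1 := by rw [nrm, hv, Real.sqrt_one]
    rw [h2, h3, mul_one] at h1
    nlinarith [abs_nonneg (u ⬝ᵥ v), le_abs_self (u ⬝ᵥ v), neg_abs_le (u ⬝ᵥ v)]
  have hvu : nrm (v - u) ≤ Real.sqrt 2 * Real.sqrt ξ := by
    rw [← Real.sqrt_mul (by norm_num : (0:ℝ) ≤ 2)]
    apply nrm_le_of_sq_le (Real.sqrt_nonneg _)
    rw [Real.sq_sqrt (by positivity)]
    have hexp : (v - u) ⬝ᵥ (v - u) = v ⬝ᵥ v - v ⬝ᵥ u - u ⬝ᵥ v + u ⬝ᵥ u := by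
      simp only [sub_dotProduct, dotProduct_sub]
      ring
    rw [hexp, hv, hu, dotProduct_comm v u]
    have huv1 : u ⬝ᵥ v ≤ 1 := by
      have h1 : |u ⬝ᵥ v| ≤ nrm u * nrm v := abs_dot_le u v
      have h2 : nrm u = 1 := by rw [nrm, hu, Real.sqrt_one]
      have h3 : nrm v = 1 := by rw [nrm, hv, Real.sqrt_one]
      rw [h2, h3, mul_one] at h1
      linarith [le_abs_self (u ⬝ᵥ v)]
    nlinarith
  -- y - z = (v ⬝ᵥ x) • v - (u ⬝ᵥ x) • u
  have hyz : y - z = (v ⬝ᵥ x) • (v - u) + ((v - u) ⬝ᵥ x) • u := by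
    rw [hy, hz]
    funext i
    simp only [Pi.sub_apply, Pi.add_apply, Pi.smul_apply, smul_eq_mul,
      sub_dotProduct]
    ring
  have hnyz : nrm (y - z) ≤ 2 * (Real.sqrt 2 * Real.sqrt ξ) := by
    rw [hyz]
    have h1 : nrm ((v ⬝ᵥ x) • (v - u) + ((v - u) ⬝ᵥ x) • u)
        ≤ |v ⬝ᵥ x| * nrm (v - u) + |(v - u) ⬝ᵥ x| * nrm u := by
      refine le_trans (nrm_add_le _ _) ?_
      rw [nrm_smul, nrm_smul]
    have hnu : nrm u = 1 := by rw [nrm, hu, Real.sqrt_one]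
    have hnx : nrm x = 1 := by rw [nrm, hx, Real.sqrt_one]
    have hnv : nrm v = 1 := by rw [nrm, hv, Real.sqrt_one]
    have h2 : |v ⬝ᵥ x| ≤ 1 := by
      have := abs_dot_le v x; rw [hnv, hnx, mul_one] at this; exact this
    have h3 : |(v - u) ⬝ᵥ x| ≤ nrm (v - u) := by
      have := abs_dot_le (v - u) x; rw [hnx, mul_one] at this; exact this
    have h4 : 0 ≤ nrm (v - u) := nrm_nonneg _
    calc nrm ((v ⬝ᵥ x) • (v - u) + ((v - u) ⬝ᵥ x) • u)
        ≤ |v ⬝ᵥ x| * nrm (v - u) + |(v - u) ⬝ᵥ x| * nrm u := h1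
      _ ≤ 1 * nrm (v - u) + nrm (v - u) * 1 := by
          refine add_le_add (mul_le_mul_of_nonneg_right h2 h4) ?_
          rw [hnu]
          exact mul_le_mul h3 le_rfl (by norm_num) h4
      _ = 2 * nrm (v - u) := by ring
      _ ≤ 2 * (Real.sqrt 2 * Real.sqrt ξ) := by linarith
  have hmain := quadS_bound hd S Q μ hQ hS hμmono hμpos (y - z) (y + z)
  have hμ0 : 0 ≤ μ ⟨0, hd⟩ := hμpos _
  have hsq2 : Real.sqrt 2 ≤ 2 := by
    nlinarith [Real.sq_sqrt (show (0:ℝ) ≤ 2 by norm_num), Real.sqrt_nonneg 2]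
  have hsqξ : 0 ≤ Real.sqrt ξ := Real.sqrt_nonneg _
  have hnyz0 : 0 ≤ nrm (y - z) := nrm_nonneg _
  have hns0 : 0 ≤ nrm (y + z) := nrm_nonneg _
  calc |(y - z) ⬝ᵥ (S *ᵥ (y + z))| ≤ μ ⟨0, hd⟩ * nrm (y - z) * nrm (y + z) := hmain
    _ ≤ 8 * μ ⟨0, hd⟩ * Real.sqrt ξ * (1 + Real.sqrt ξ) := by
      have hprod : nrm (y - z) * nrm (y + z) ≤ (2 * (Real.sqrt 2 * Real.sqrt ξ)) * 2 :=
        mul_le_mul hnyz hns hns0 (by positivity)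
      nlinarith [hprod, hμ0, hsqξ, hsq2, mul_nonneg hμ0 hsqξ,
        mul_nonneg (mul_nonneg hμ0 hsqξ) hsqξ,
        mul_le_mul_of_nonneg_left hprod hμ0]

lemma quad_diag (R : Matrix (Fin d) (Fin d) ℝ) (f : Fin d → ℝ) (x : Fin d → ℝ) :
    x ⬝ᵥ ((R * Matrix.diagonal f * Rᵀ) *ᵥ x) = ∑ j, f j * ((Rᵀ *ᵥ x) j * (Rᵀ *ᵥ x) j) := by
  have h1 : (R * Matrix.diagonal f * Rᵀ) *ᵥ x = R *ᵥ (Matrix.diagonal f *ᵥ (Rᵀ *ᵥ x)) := by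
    rw [Matrix.mulVec_mulVec, Matrix.mulVec_mulVec]
  rw [h1, Matrix.dotProduct_mulVec]
  rw [show x ᵥ* R = Rᵀ *ᵥ x by rw [← Matrix.transpose_transpose R, Matrix.vecMul_transpose,
    Matrix.transpose_transpose]]
  simp only [dotProduct, Matrix.mulVec_diagonal]
  exact Finset.sum_congr rfl fun j _ => by ring

lemma weyl_one_sided {k : ℕ} (hk : k < d) (A B Q R : Matrix (Fin d) (Fin d) ℝ)
    (μ ν : Fin d → ℝ)
    (hQ : Qᵀ * Q = 1) (hA : A = Q * Matrix.diagonal μ * Qᵀ)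
    (hμ : ∀ i j : Fin d, i ≤ j → μ j ≤ μ i)
    (hR : Rᵀ * R = 1) (hB : B = R * Matrix.diagonal ν * Rᵀ)
    (hν : ∀ i j : Fin d, i ≤ j → ν j ≤ ν i)
    (Δ : ℝ)
    (hΔ : ∀ x : Fin d → ℝ, x ⬝ᵥ x = 1 → x ⬝ᵥ (A *ᵥ x) - x ⬝ᵥ (B *ᵥ x) ≤ Δ) :
    μ ⟨k, hk⟩ ≤ ν ⟨k, hk⟩ + Δ := by
  classical
  have hk1 : k + 1 ≤ d := hk
  set e1 : Fin (k+1) → Fin d := Fin.castLE hk1 with he1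
  set e2 : Fin k → Fin d := Fin.castLE (Nat.le_of_lt hk) with he2
  have he1inj : Function.Injective e1 := Fin.castLE_injective _
  set ext : (Fin (k+1) → ℝ) →ₗ[ℝ] (Fin d → ℝ) := Function.ExtendByZero.linearMap ℝ e1 with hext
  set L : (Fin (k+1) → ℝ) →ₗ[ℝ] (Fin k → ℝ) :=
    (LinearMap.funLeft ℝ ℝ e2).comp (((Rᵀ*Q).mulVecLin).comp ext) with hL
  have hnotinj : ¬ Function.Injective L := by
    intro h
    have h1 := LinearMap.finrank_le_finrank_of_injective h
    simp only [Module.finrank_pi, Fintype.card_fin] at h1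
    omega
  obtain ⟨a, b, hab, hne⟩ := Function.not_injective_iff.mp hnotinj
  set c : Fin (k+1) → ℝ := a - b with hcdef
  have hc0 : c ≠ 0 := sub_ne_zero.mpr hne
  have hLc : L c = 0 := by rw [hcdef, map_sub, hab, sub_self]
  set c' : Fin d → ℝ := ext c with hc'
  have hc'at : ∀ l : Fin (k+1), c' (e1 l) = c l := by
    intro l
    simp only [hc', hext, Function.ExtendByZero.linearMap_apply]
    exact he1inj.extend_apply c 0 l
  have hc'zero : ∀ j : Fin d, k < (j : ℕ) → c' j = 0 := by
    intro j hj
    simp only [hc', hext, Function.ExtendByZero.linearMap_apply]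
    apply Function.extend_apply'
    rintro ⟨l, rfl⟩
    simp only [he1, Fin.coe_castLE] at hj
    omega
  have hc'ne : c' ≠ 0 := by
    obtain ⟨l, hl⟩ := Function.ne_iff.mp hc0
    intro h
    apply hl
    have := hc'at l
    rw [h] at this
    simpa using this.symm
  set x : Fin d → ℝ := Q *ᵥ c' with hx
  have hQQt : Q * Qᵀ = 1 := mul_eq_one_comm.mp hQ
  have hRRt : R * Rᵀ = 1 := mul_eq_one_comm.mp hR
  have hxx : x ⬝ᵥ x = c' ⬝ᵥ c' := by
    rw [hx, dot_mm, hQ, Matrix.one_mulVec]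
  have hn2pos : 0 < x ⬝ᵥ x := by
    rw [hxx]
    rcases lt_or_eq_of_le (Finset.sum_nonneg fun i _ => mul_self_nonneg (c' i)) with h | h
    · exact h
    · exact absurd (dotProduct_self_eq_zero.mp h.symm) hc'ne
  have hQtx : Qᵀ *ᵥ x = c' := by
    rw [hx, Matrix.mulVec_mulVec, hQ, Matrix.one_mulVec]
  have hqA : x ⬝ᵥ (A *ᵥ x) = ∑ j, μ j * (c' j * c' j) := by
    rw [hA, quad_diag, hQtx]
  set y : Fin d → ℝ := Rᵀ *ᵥ x with hy
  have hyy : y ⬝ᵥ y = x ⬝ᵥ x := by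
    rw [hy, dot_mm, Matrix.transpose_transpose, hRRt, Matrix.one_mulVec]
  have hqB : x ⬝ᵥ (B *ᵥ x) = ∑ j, ν j * (y j * y j) := by
    rw [hB, quad_diag]
  have hy0 : ∀ j : Fin d, (j : ℕ) < k → y j = 0 := by
    intro j hj
    have := congr_fun hLc ⟨(j : ℕ), hj⟩
    simp only [hL, LinearMap.comp_apply, LinearMap.funLeft_apply, Matrix.mulVecLin_apply,
      Pi.zero_apply] at this
    have hje : e2 ⟨(j : ℕ), hj⟩ = j := by
      simp [he2, Fin.ext_iff]
    rw [hje] at this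
    rw [hy, hx, Matrix.mulVec_mulVec]
    exact this
  have I1 : μ ⟨k, hk⟩ * (x ⬝ᵥ x) ≤ x ⬝ᵥ (A *ᵥ x) := by
    rw [hqA, hxx]
    have h2 : μ ⟨k, hk⟩ * (c' ⬝ᵥ c') = ∑ j, μ ⟨k, hk⟩ * (c' j * c' j) := by
      rw [dotProduct, Finset.mul_sum]
    rw [h2]
    apply Finset.sum_le_sum
    intro j _
    by_cases hj : (j : ℕ) ≤ k
    · exact mul_le_mul_of_nonneg_right (hμ j ⟨k, hk⟩ (Fin.le_def.mpr (by simpa using hj)))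
        (mul_self_nonneg _)
    · rw [hc'zero j (by omega)]
      simp
  have I2 : x ⬝ᵥ (B *ᵥ x) ≤ ν ⟨k, hk⟩ * (x ⬝ᵥ x) := by
    rw [hqB, ← hyy]
    have h2 : ν ⟨k, hk⟩ * (y ⬝ᵥ y) = ∑ j, ν ⟨k, hk⟩ * (y j * y j) := by
      rw [dotProduct, Finset.mul_sum]
    rw [h2]
    apply Finset.sum_le_sum
    intro j _
    by_cases hj : (j : ℕ) < k
    · rw [hy0 j hj]; simp
    · exact mul_le_mul_of_nonneg_right (hν ⟨k, hk⟩ j (Fin.le_def.mpr (by simp; omega)))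
        (mul_self_nonneg _)
  have I3 : x ⬝ᵥ (A *ᵥ x) - x ⬝ᵥ (B *ᵥ x) ≤ Δ * (x ⬝ᵥ x) := by
    set t : ℝ := (Real.sqrt (x ⬝ᵥ x))⁻¹ with ht
    have hst : Real.sqrt (x ⬝ᵥ x) > 0 := Real.sqrt_pos.mpr hn2pos
    have ht2 : t * t * (x ⬝ᵥ x) = 1 := by
      rw [ht, ← mul_inv, Real.mul_self_sqrt (le_of_lt hn2pos)]
      field_simp
    have hx1 : (t • x) ⬝ᵥ (t • x) = 1 := by
      rw [smul_dotProduct, dotProduct_smul, smul_eq_mul, smul_eq_mul, ← mul_assoc,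
        ht2]
    have hDs := hΔ (t • x) hx1
    have hA' : (t • x) ⬝ᵥ (A *ᵥ (t • x)) = t * t * (x ⬝ᵥ (A *ᵥ x)) := by
      rw [Matrix.mulVec_smul, smul_dotProduct, dotProduct_smul]
      simp only [smul_eq_mul]; ring
    have hB' : (t • x) ⬝ᵥ (B *ᵥ (t • x)) = t * t * (x ⬝ᵥ (B *ᵥ x)) := by
      rw [Matrix.mulVec_smul, smul_dotProduct, dotProduct_smul]
      simp only [smul_eq_mul]; ring
    rw [hA', hB'] at hDs
    have hkey : x ⬝ᵥ (A *ᵥ x) - x ⬝ᵥ (B *ᵥ x)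
        = (t * t * (x ⬝ᵥ (A *ᵥ x)) - t * t * (x ⬝ᵥ (B *ᵥ x))) * (x ⬝ᵥ x) := by
      have : (t * t * (x ⬝ᵥ (A *ᵥ x)) - t * t * (x ⬝ᵥ (B *ᵥ x))) * (x ⬝ᵥ x)
          = (x ⬝ᵥ (A *ᵥ x) - x ⬝ᵥ (B *ᵥ x)) * (t * t * (x ⬝ᵥ x)) := by ring
      rw [this, ht2, mul_one]
    rw [hkey]
    exact mul_le_mul_of_nonneg_right (by linarith) (le_of_lt hn2pos)
  have h4 : μ ⟨k, hk⟩ * (x ⬝ᵥ x) ≤ (ν ⟨k, hk⟩ + Δ) * (x ⬝ᵥ x) := by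
    have : (ν ⟨k, hk⟩ + Δ) * (x ⬝ᵥ x) = ν ⟨k, hk⟩ * (x ⬝ᵥ x) + Δ * (x ⬝ᵥ x) := by ring
    rw [this]
    linarith
  exact le_of_mul_le_mul_right h4 hn2pos

lemma vmv_mul_vmv (w : Fin d → ℝ) :
    vecMulVec w w * vecMulVec w w = (w ⬝ᵥ w) • vecMulVec w w := by
  ext i j
  simp only [Matrix.mul_apply, vecMulVec_apply, Matrix.smul_apply, smul_eq_mul,
    dotProduct, Finset.sum_mul]
  rw [Finset.sum_congr rfl (fun k _ => by ring : ∀ k ∈ Finset.univ,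
    w i * w k * (w k * w j) = w k * w k * (w i * w j)), ← Finset.sum_mul]


lemma householder (hd : 0 < d) (Q : Matrix (Fin d) (Fin d) ℝ) (μ : Fin d → ℝ)
    (hQ : Qᵀ * Q = 1) (v : Fin d → ℝ) (hv : v ⬝ᵥ v = 1)
    (hsupp : ∀ j, (Qᵀ *ᵥ v) j ≠ 0 → μ j = μ ⟨0, hd⟩) :
    ∃ Q' : Matrix (Fin d) (Fin d) ℝ, Q'ᵀ * Q' = 1 ∧
      Q' * Matrix.diagonal μ * Q'ᵀ = Q * Matrix.diagonal μ * Qᵀ ∧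
      Q' *ᵥ Pi.single ⟨0, hd⟩ 1 = v := by
  classical
  have hQQt : Q * Qᵀ = 1 := mul_eq_one_comm.mp hQ
  set z : Fin d := ⟨0, hd⟩
  set c : Fin d → ℝ := Qᵀ *ᵥ v with hc
  set e : Fin d → ℝ := Pi.single z 1 with he
  have hQc : Q *ᵥ c = v := by
    rw [hc, Matrix.mulVec_mulVec, hQQt, Matrix.one_mulVec]
  have hcc : c ⬝ᵥ c = 1 := by
    rw [hc, dot_mm, Matrix.transpose_transpose, hQQt, Matrix.one_mulVec, hv]
  have hee : e ⬝ᵥ e = 1 := by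
    rw [he, dotProduct_single]
    simp
  have hce : c ⬝ᵥ e = c z := by rw [he, dotProduct_single, mul_one]
  have hec : e ⬝ᵥ c = c z := by rw [he, single_dotProduct, one_mul]
  by_cases hceq : c = e
  · refine ⟨Q, hQ, rfl, ?_⟩
    show Q *ᵥ e = v
    rw [← hceq, hQc]
  · set w : Fin d → ℝ := c - e with hw
    have hw0 : w ≠ 0 := sub_ne_zero.mpr hceq
    set nw : ℝ := w ⬝ᵥ w with hnw
    have hnwval : nw = 2 - 2 * c z := by
      rw [hnw, hw]
      simp only [sub_dotProduct, dotProduct_sub]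
      rw [hcc, hee, hce, hec]; ring
    have hnwpos : 0 < nw := by
      rcases lt_or_eq_of_le (Finset.sum_nonneg fun i _ => mul_self_nonneg (w i)) with h | h
      · exact h
      · exact absurd (dotProduct_self_eq_zero.mp h.symm) hw0
    have hnwne : nw ≠ 0 := ne_of_gt hnwpos
    set s : ℝ := 2 / nw with hs
    set W : Matrix (Fin d) (Fin d) ℝ := vecMulVec w w with hW
    set O : Matrix (Fin d) (Fin d) ℝ := 1 - s • W with hO
    have hOt : Oᵀ = O := by
      rw [hO, Matrix.transpose_sub, Matrix.transpose_one, Matrix.transpose_smul, hW,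
        vmv_transpose]
    have hWW : W * W = nw • W := by rw [hW, vmv_mul_vmv, hnw]
    have hOO : O * O = 1 := by
      have h1 : O * O = 1 - s • W - s • W + (s • W) * (s • W) := by
        rw [hO, sub_mul, mul_sub, mul_sub]; simp only [one_mul, mul_one]; abel
      have h2 : (s • W) * (s • W) = (s * s * nw) • W := by
        rw [Matrix.smul_mul, Matrix.mul_smul, hWW, smul_smul, smul_smul]
      have h3 : s * s * nw = s + s := by
        rw [hs]; field_simp; ring
      rw [h1, h2, h3]
      module
    have hwsupp : ∀ j, w j ≠ 0 → μ j = μ z := by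
      intro j hj
      by_cases hjz : j = z
      · rw [hjz]
      · apply hsupp
        intro hcj
        apply hj
        rw [hw]
        show c j - e j = 0
        rw [hcj, he, Pi.single_apply, if_neg hjz, sub_zero]
    have hcommW : Matrix.diagonal μ * W = W * Matrix.diagonal μ := by
      ext i j
      rw [Matrix.diagonal_mul, Matrix.mul_diagonal, hW, vecMulVec_apply]
      by_cases hi : w i = 0
      · rw [hi]; ring
      · by_cases hj : w j = 0
        · rw [hj]; ring
        · rw [hwsupp i hi, hwsupp j hj]; ring
    have hcomm : Matrix.diagonal μ * O = O * Matrix.diagonal μ := by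
      rw [hO, mul_sub, sub_mul, mul_one, one_mul, Matrix.mul_smul, Matrix.smul_mul, hcommW]
    have hOe : O *ᵥ e = c := by
      rw [hO, Matrix.sub_mulVec, Matrix.one_mulVec, Matrix.smul_mulVec, hW, vmv_mulVec]
      have hwe : w ⬝ᵥ e = c z - 1 := by
        rw [hw, sub_dotProduct, hce, hee]
      rw [hwe, smul_smul]
      have : s * (c z - 1) = -1 := by
        rw [hs, hnwval]
        have h2 : (2 : ℝ) - 2 * c z ≠ 0 := by rw [← hnwval]; exact hnwne
        have h3 : (1 : ℝ) - c z ≠ 0 := fun h => h2 (by linarith)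
        field_simp
        ring
      rw [this]
      funext i
      simp only [Pi.sub_apply, Pi.smul_apply, smul_eq_mul, hw, Pi.sub_apply]
      ring
    refine ⟨Q * O, ?_, ?_, ?_⟩
    · rw [Matrix.transpose_mul, hOt, Matrix.mul_assoc, ← Matrix.mul_assoc Qᵀ, hQ, Matrix.one_mul,
        hOO]
    · rw [Matrix.transpose_mul, hOt]
      have h5 : Q * O * Matrix.diagonal μ * (O * Qᵀ) = Q * (O * Matrix.diagonal μ * O) * Qᵀ := by
        noncomm_ring
      rw [h5, ← hcomm, Matrix.mul_assoc (Matrix.diagonal μ), hOO, Matrix.mul_one]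
    · show (Q * O) *ᵥ e = v
      rw [← Matrix.mulVec_mulVec, hOe, hQc]


variable {d : ℕ}

lemma mdiag_apply (M : Matrix (Fin d) (Fin d) ℝ) (f : Fin d → ℝ) (i j : Fin d) :
    (M * Matrix.diagonal f * Mᵀ) i j = ∑ k, M i k * f k * M j k := by
  rw [Matrix.mul_apply]
  exact Finset.sum_congr rfl fun k _ => by
    rw [Matrix.mul_diagonal, Matrix.transpose_apply]

def rot (hd : 0 < d) : Equiv.Perm (Fin d) where
  toFun j := ⟨if (j : ℕ) + 1 < d then (j : ℕ) + 1 else 0, by split <;> omega⟩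
  invFun j := ⟨if (j : ℕ) = 0 then d - 1 else (j : ℕ) - 1, by have := j.isLt; split <;> omega⟩
  left_inv j := by
    have hj := j.isLt
    apply Fin.ext
    simp only
    split_ifs with h1 h2 h3 <;> simp_all <;> omega
  right_inv j := by
    have hj := j.isLt
    apply Fin.ext
    simp only
    split_ifs with h1 h2 h3 <;> simp_all <;> omega

lemma rot_apply (hd : 0 < d) (m : ℕ) (hm : m < d) (hm1 : m + 1 < d) :
    rot hd ⟨m, hm⟩ = ⟨m + 1, hm1⟩ := by
  apply Fin.ext
  simp [rot, hm1]

lemma rot_apply_last (hd : 0 < d) (m : ℕ) (hm : m < d) (hm1 : ¬ (m + 1 < d)) :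
    rot hd ⟨m, hm⟩ = ⟨0, hd⟩ := by
  apply Fin.ext
  simp [rot, hm1]

lemma perm_decomp (Q' : Matrix (Fin d) (Fin d) ℝ) (μ' : Fin d → ℝ)
    (hQ' : Q'ᵀ * Q' = 1) (σ : Equiv.Perm (Fin d)) :
    (Q'.submatrix id σ)ᵀ * (Q'.submatrix id σ) = 1 ∧
    Q'.submatrix id σ * Matrix.diagonal (fun j => μ' (σ j)) * (Q'.submatrix id σ)ᵀ
      = Q' * Matrix.diagonal μ' * Q'ᵀ := by
  constructor
  · ext i j
    have h1 : ((Q'.submatrix id σ)ᵀ * Q'.submatrix id σ) i j = (Q'ᵀ * Q') (σ i) (σ j) := by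
      simp [Matrix.mul_apply, Matrix.submatrix_apply, Matrix.transpose_apply]
    rw [h1, hQ']
    simp [Matrix.one_apply, EmbeddingLike.apply_eq_iff_eq]
  · ext i j
    rw [mdiag_apply, mdiag_apply]
    simp only [Matrix.submatrix_apply, id]
    exact Equiv.sum_comp σ (fun k => Q' i k * μ' k * Q' j k)

lemma conj_mul (U A B : Matrix (Fin d) (Fin d) ℝ) (hU : Uᵀ * U = 1) :
    (U * A * Uᵀ) * (U * B * Uᵀ) = U * (A * B) * Uᵀ := by
  simp only [Matrix.mul_assoc]
  rw [← Matrix.mul_assoc Uᵀ U (B * Uᵀ), hU, Matrix.one_mul]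

lemma vmv_conj (M : Matrix (Fin d) (Fin d) ℝ) (e : Fin d → ℝ) :
    vecMulVec (M *ᵥ e) (M *ᵥ e) = M * vecMulVec e e * Mᵀ := by
  ext i j
  simp only [vecMulVec_apply, Matrix.mul_apply, Matrix.transpose_apply, Matrix.mulVec,
    dotProduct, Finset.sum_mul, Finset.mul_sum]
  refine Finset.sum_congr rfl fun k _ => Finset.sum_congr rfl fun l _ => by ring

lemma vmv_single (z : Fin d) :
    vecMulVec (Pi.single z (1:ℝ)) (Pi.single z (1:ℝ)) = Matrix.diagonal (Pi.single z 1) := by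
  ext i j
  rw [vecMulVec_apply, Matrix.diagonal_apply, Pi.single_apply, Pi.single_apply]
  split_ifs <;> simp_all


def muP (hd : 0 < d) (μ : Fin d → ℝ) : Fin d → ℝ := fun j => if j = ⟨0, hd⟩ then 0 else μ j

def gP (hd : 0 < d) : Fin d → ℝ := fun j => if j = ⟨0, hd⟩ then 0 else 1

def nuP (hd : 0 < d) (μ : Fin d → ℝ) : Fin d → ℝ := fun j => muP hd μ (rot hd j)

lemma muP_nonneg (hd : 0 < d) (μ : Fin d → ℝ) (hμpos : ∀ i, 0 ≤ μ i) (j : Fin d) :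
    0 ≤ muP hd μ j := by
  rw [muP]; split
  · exact le_rfl
  · exact hμpos j

lemma nuP_mono (hd : 0 < d) (μ : Fin d → ℝ)
    (hμmono : ∀ i j : Fin d, i ≤ j → μ j ≤ μ i) (hμpos : ∀ i, 0 ≤ μ i) :
    ∀ a b : Fin d, a ≤ b → nuP hd μ b ≤ nuP hd μ a := by
  intro a b hab
  have hab' : (a : ℕ) ≤ (b : ℕ) := hab
  rw [nuP, nuP]
  by_cases hb1 : (b : ℕ) + 1 < d
  · have ha1 : (a : ℕ) + 1 < d := by omega
    have ea : rot hd a = ⟨(a : ℕ) + 1, ha1⟩ := rot_apply hd a.1 a.isLt ha1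
    have eb : rot hd b = ⟨(b : ℕ) + 1, hb1⟩ := rot_apply hd b.1 b.isLt hb1
    rw [ea, eb, muP, muP]
    rw [if_neg (by simp [Fin.ext_iff]), if_neg (by simp [Fin.ext_iff])]
    exact hμmono _ _ (by rw [Fin.le_def]; simp; omega)
  · have eb : rot hd b = ⟨0, hd⟩ := rot_apply_last hd b.1 b.isLt hb1
    rw [eb, muP, if_pos rfl]
    exact muP_nonneg hd μ hμpos _

lemma nuP_eq (hd : 0 < d) (μ : Fin d → ℝ) (i : ℕ) (hi : i + 1 < d) :
    nuP hd μ ⟨i, Nat.lt_of_succ_lt hi⟩ = μ ⟨i + 1, hi⟩ := by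
  rw [nuP, rot_apply hd i (by omega) hi, muP, if_neg (by simp [Fin.ext_iff])]

lemma diag_gP (hd : 0 < d) (μ : Fin d → ℝ) :
    Matrix.diagonal (gP hd) * Matrix.diagonal μ * Matrix.diagonal (gP hd)
      = Matrix.diagonal (muP hd μ) := by
  rw [Matrix.diagonal_mul_diagonal, Matrix.diagonal_mul_diagonal]
  apply congrArg
  funext j
  simp only [gP, muP]
  split <;> simp_all

lemma diag_gP_eq (hd : 0 < d) :
    Matrix.diagonal (gP hd) = 1 - Matrix.diagonal (Pi.single (⟨0, hd⟩ : Fin d) (1:ℝ)) := by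
  ext i j
  rw [Matrix.diagonal_apply, Matrix.sub_apply, Matrix.one_apply, Matrix.diagonal_apply]
  simp only [gP, Pi.single_apply]
  split_ifs <;> simp_all

end EigenDeflAux

open EigenDeflAux

/-- **Eigenvalue perturbation under approximate deflation.**
Let `S` be `d × d` symmetric PSD with eigenvalues `μ 0 ≥ … ≥ μ (d-1)` (via an
orthogonal eigendecomposition with nonincreasing, nonnegative `μ`) and unit top
eigenvector `v₁` (for the largest eigenvalue `μ 0`).  Let `u` be a unit vector with
`sin² θ = 1 - ⟨u, v₁⟩² ≤ ξ`, where `θ` is the angle between `u` and `v₁`, and set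
`P = I - u uᵀ`.  If `ν 0 ≥ … ≥ ν (d-1)` are the eigenvalues of `P S P` (again via
an orthogonal eigendecomposition with nonincreasing `ν`), then for every `i` with
`i + 1 < d` (so that both `λ̃_i` of `P S P` and `λ_{i+1}` of `S` exist, 0-based),
`|ν i - μ (i+1)| ≤ Δ` with `Δ = 8 λ_1 √ξ (1 + √ξ)`; in particular
`μ (i+1) - Δ ≤ ν i ≤ μ (i+1) + Δ`. -/
theorem eigenvalues_after_deflation {d : ℕ} (hd : 0 < d)
    (S Q : Matrix (Fin d) (Fin d) ℝ) (μ : Fin d → ℝ)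
    (hQ : Qᵀ * Q = 1) (hdecomp : S = Q * Matrix.diagonal μ * Qᵀ)
    (hμmono : ∀ i j : Fin d, i ≤ j → μ j ≤ μ i)
    (hμpos : ∀ i, 0 ≤ μ i)
    (v₁ : Fin d → ℝ) (hv₁ : v₁ ⬝ᵥ v₁ = 1)
    (hev : S *ᵥ v₁ = μ ⟨0, hd⟩ • v₁)
    (u : Fin d → ℝ) (hu : u ⬝ᵥ u = 1)
    (ξ : ℝ) (hangle : 1 - (u ⬝ᵥ v₁) ^ 2 ≤ ξ)
    (P : Matrix (Fin d) (Fin d) ℝ) (hP : P = 1 - vecMulVec u u)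
    (R : Matrix (Fin d) (Fin d) ℝ) (ν : Fin d → ℝ)
    (hR : Rᵀ * R = 1) (hPSP : P * S * P = R * Matrix.diagonal ν * Rᵀ)
    (hνmono : ∀ i j : Fin d, i ≤ j → ν j ≤ ν i) :
    ∀ (i : ℕ) (hi : i + 1 < d),
      |ν ⟨i, by omega⟩ - μ ⟨i + 1, hi⟩| ≤
        8 * μ ⟨0, hd⟩ * Real.sqrt ξ * (1 + Real.sqrt ξ) := by
  intro i hi
  classical
  obtain ⟨v, hvvm, hv, hevv, huv, hang⟩ :
      ∃ v : Fin d → ℝ, vecMulVec v v = vecMulVec v₁ v₁ ∧ v ⬝ᵥ v = 1 ∧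
        S *ᵥ v = μ ⟨0, hd⟩ • v ∧ 0 ≤ u ⬝ᵥ v ∧ 1 - (u ⬝ᵥ v) ^ 2 ≤ ξ := by
    rcases le_or_gt 0 (u ⬝ᵥ v₁) with h | h
    · exact ⟨v₁, rfl, hv₁, hev, h, hangle⟩
    · refine ⟨-v₁, ?_, ?_, ?_, ?_, ?_⟩
      · ext a b; simp only [vecMulVec_apply, Pi.neg_apply]; ring
      · rw [neg_dotProduct, dotProduct_neg, neg_neg, hv₁]
      · rw [Matrix.mulVec_neg, hev, smul_neg]
      · rw [dotProduct_neg]; linarith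
      · rw [dotProduct_neg, neg_sq]; exact hangle
  -- the coordinates of `v` in the eigenbasis are supported on the top eigenspace
  have hsupp : ∀ j, (Qᵀ *ᵥ v) j ≠ 0 → μ j = μ ⟨0, hd⟩ := by
    intro j hj
    have h2 : Matrix.diagonal μ * Qᵀ = Qᵀ * S := by
      rw [hdecomp, ← Matrix.mul_assoc, ← Matrix.mul_assoc, hQ, Matrix.one_mul]
    have h1 : Matrix.diagonal μ *ᵥ (Qᵀ *ᵥ v) = μ ⟨0, hd⟩ • (Qᵀ *ᵥ v) := by
      rw [Matrix.mulVec_mulVec, h2, ← Matrix.mulVec_mulVec, hevv, Matrix.mulVec_smul]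
    have h3 := congr_fun h1 j
    rw [Matrix.mulVec_diagonal] at h3
    simp only [Pi.smul_apply, smul_eq_mul] at h3
    exact mul_right_cancel₀ hj h3
  obtain ⟨Q', hQ'1, hQ'2, hQ'col⟩ := householder hd Q μ hQ v hv hsupp
  have hQ'Qt : Q' * Q'ᵀ = 1 := mul_eq_one_comm.mp hQ'1
  have hSQ' : Q' * Matrix.diagonal μ * Q'ᵀ = S := by rw [hQ'2, ← hdecomp]
  have hvvQ : vecMulVec v v
      = Q' * Matrix.diagonal (Pi.single (⟨0, hd⟩ : Fin d) (1:ℝ)) * Q'ᵀ := by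
    rw [← hQ'col, vmv_conj, vmv_single]
  have hPv : (1 : Matrix (Fin d) (Fin d) ℝ) - vecMulVec v v
      = Q' * Matrix.diagonal (gP hd) * Q'ᵀ := by
    rw [hvvQ, diag_gP_eq hd, Matrix.mul_sub, Matrix.sub_mul, Matrix.mul_one, hQ'Qt]
  set B : Matrix (Fin d) (Fin d) ℝ :=
    (1 - vecMulVec v v) * S * (1 - vecMulVec v v) with hBdef
  have hBdec : B = Q' * Matrix.diagonal (muP hd μ) * Q'ᵀ := by
    rw [hBdef, hPv, ← hSQ', conj_mul _ _ _ hQ'1, conj_mul _ _ _ hQ'1, diag_gP hd μ]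
  obtain ⟨hR'1, hR'2⟩ := perm_decomp Q' (muP hd μ) hQ'1 (rot hd)
  set R' : Matrix (Fin d) (Fin d) ℝ := Q'.submatrix id (rot hd) with hR'def
  have hBdec' : B = R' * Matrix.diagonal (nuP hd μ) * R'ᵀ := by
    rw [hBdec, ← hR'2]; rfl
  have hΔ : ∀ x : Fin d → ℝ, x ⬝ᵥ x = 1 →
      |x ⬝ᵥ ((P * S * P) *ᵥ x) - x ⬝ᵥ (B *ᵥ x)|
        ≤ 8 * μ ⟨0, hd⟩ * Real.sqrt ξ * (1 + Real.sqrt ξ) := by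
    intro x hx
    rw [hP, hBdef]
    exact quad_diff_bound hd S Q μ hQ hdecomp hμmono hμpos u v hu hv huv ξ hang x hx
  have W1 := weyl_one_sided (Nat.lt_of_succ_lt hi) (P * S * P) B R R'
    ν (nuP hd μ) hR hPSP hνmono hR'1 hBdec' (nuP_mono hd μ hμmono hμpos)
    (8 * μ ⟨0, hd⟩ * Real.sqrt ξ * (1 + Real.sqrt ξ))
    (fun x hx => le_trans (le_abs_self _) (hΔ x hx))
  have W2 := weyl_one_sided (Nat.lt_of_succ_lt hi) B (P * S * P) R' R
    (nuP hd μ) ν hR'1 hBdec' (nuP_mono hd μ hμmono hμpos) hR hPSP hνmono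
    (8 * μ ⟨0, hd⟩ * Real.sqrt ξ * (1 + Real.sqrt ξ))
    (fun x hx => by
      have h := hΔ x hx
      rw [abs_sub_comm] at h
      exact le_trans (le_abs_self _) h)
  have hEq : nuP hd μ ⟨i, Nat.lt_of_succ_lt hi⟩ = μ ⟨i + 1, hi⟩ := nuP_eq hd μ i hi
  rw [hEq] at W1 W2
  show |ν ⟨i, Nat.lt_of_succ_lt hi⟩ - μ ⟨i + 1, hi⟩| ≤
    8 * μ ⟨0, hd⟩ * Real.sqrt ξ * (1 + Real.sqrt ξ)
  rw [abs_sub_le_iff]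
  constructor <;> linarith [W1, W2]
end

section
/- Let Σ be a d×d real symmetric PSD matrix with eigenvalues λ_1 ≥ λ_2 ≥ … ≥ λ_d and unit top eigenvector v_1. Let u be a unit vector with sin²θ ≤ ξ, where θ is the angle between u and v_1, and set P = I_d − u uᵀ. Let λ̃_1 ≥ λ̃_2 denote the two largest eigenvalues of P Σ P. Then λ̃_1 − λ̃_2 ≥ λ_2 − λ_3 − 2Δ, where Δ = 8·λ_1·√ξ·(1 + √ξ). -/
open Matrix Finset
private lemma quad_form {d : ℕ} (Q : Matrix (Fin d) (Fin d) ℝ) (μ : Fin d → ℝ)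
    (a b : Fin d → ℝ) :
    a ⬝ᵥ ((Q * Matrix.diagonal μ * Qᵀ) *ᵥ b)
      = ∑ i, μ i * ((fun j => Q j i) ⬝ᵥ a) * ((fun j => Q j i) ⬝ᵥ b) := by
  have key : ∀ (c e : Fin d → ℝ), c ⬝ᵥ (Matrix.diagonal μ *ᵥ e) = ∑ i, μ i * c i * e i := by
    intro c e
    simp only [dotProduct, Matrix.mulVec_diagonal]
    exact Finset.sum_congr rfl fun i _ => by ring
  rw [← Matrix.mulVec_mulVec, ← Matrix.mulVec_mulVec, Matrix.dotProduct_mulVec,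
    show a ᵥ* Q = Qᵀ *ᵥ a from (Matrix.mulVec_transpose Q a).symm, key]
  rfl

private lemma parseval {d : ℕ} (Q : Matrix (Fin d) (Fin d) ℝ) (hQ : Qᵀ * Q = 1)
    (a b : Fin d → ℝ) :
    a ⬝ᵥ b = ∑ i, ((fun j => Q j i) ⬝ᵥ a) * ((fun j => Q j i) ⬝ᵥ b) := by
  have h1 : Q * Matrix.diagonal (fun _ => (1:ℝ)) * Qᵀ = 1 := by
    rw [Matrix.diagonal_one, Matrix.mul_one]
    exact mul_eq_one_comm.mp hQ
  have h2 := quad_form Q (fun _ => (1:ℝ)) a b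
  rw [h1] at h2
  simpa using h2

private lemma cs_dot {d : ℕ} (a b : Fin d → ℝ) : (a ⬝ᵥ b)^2 ≤ (a ⬝ᵥ a) * (b ⬝ᵥ b) := by
  simpa [dotProduct, pow_two] using Finset.sum_mul_sq_le_sq_mul_sq Finset.univ a b

private lemma sum_pair_of_vanish {d : ℕ} (f : Fin d → ℝ) (i0 i1 : Fin d) (h01 : i0 ≠ i1)
    (hf : ∀ i, i ≠ i0 → i ≠ i1 → f i = 0) : ∑ i, f i = f i0 + f i1 := by
  rw [← Finset.sum_pair h01]
  refine (Finset.sum_subset (Finset.subset_univ _) (fun i _ hi => ?_)).symm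
  simp only [Finset.mem_insert, Finset.mem_singleton] at hi
  push_neg at hi
  exact hf i hi.1 hi.2

private lemma dot_sub_smul {d : ℕ} (a b e : Fin d → ℝ) (t : ℝ) :
    (fun j => a j - t * b j) ⬝ᵥ e = a ⬝ᵥ e - t * (b ⬝ᵥ e) := by
  simp only [dotProduct, Finset.mul_sum, ← Finset.sum_sub_distrib]
  exact Finset.sum_congr rfl fun i _ => by ring

private lemma dot_comb {d : ℕ} (a b e : Fin d → ℝ) (s t : ℝ) :
    (fun j => s * a j + t * b j) ⬝ᵥ e = s * (a ⬝ᵥ e) + t * (b ⬝ᵥ e) := by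
  simp only [dotProduct, Finset.mul_sum, ← Finset.sum_add_distrib]
  exact Finset.sum_congr rfl fun i _ => by ring

private lemma dot_comb' {d : ℕ} (a b e : Fin d → ℝ) (s t : ℝ) :
    (fun j => s * a j - t * b j) ⬝ᵥ e = s * (a ⬝ᵥ e) - t * (b ⬝ᵥ e) := by
  simp only [dotProduct, Finset.mul_sum, ← Finset.sum_sub_distrib]
  exact Finset.sum_congr rfl fun i _ => by ring

set_option maxHeartbeats 1000000 in
/-- **Eigengap after approximate deflation.**
Let `S` be `d × d` symmetric PSD with eigenvalues `μ 0 ≥ … ≥ μ (d-1)` (via an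
orthogonal eigendecomposition with nonincreasing, nonnegative `μ`) and unit top
eigenvector `v₁`.  Let `u` be a unit vector with `sin² θ = 1 - ⟨u, v₁⟩² ≤ ξ`,
where `θ` is the angle between `u` and `v₁`, and set `P = I - u uᵀ`.  If
`ν 0 ≥ ν 1` are the two largest eigenvalues of `P S P` (via an orthogonal
eigendecomposition with nonincreasing `ν`), then
`ν 0 - ν 1 ≥ λ_2 - λ_3 - 2Δ` (1-based; i.e. `μ 1 - μ 2 - 2Δ` 0-based), where
`Δ = 8 λ_1 √ξ (1 + √ξ)`. -/
theorem eigengap_after_deflation {d : ℕ} (hd : 3 ≤ d)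
    (S Q : Matrix (Fin d) (Fin d) ℝ) (μ : Fin d → ℝ)
    (hQ : Qᵀ * Q = 1) (hdecomp : S = Q * Matrix.diagonal μ * Qᵀ)
    (hμmono : ∀ i j : Fin d, i ≤ j → μ j ≤ μ i)
    (hμpos : ∀ i, 0 ≤ μ i)
    (v₁ : Fin d → ℝ) (hv₁ : v₁ ⬝ᵥ v₁ = 1)
    (hev : S *ᵥ v₁ = μ ⟨0, by omega⟩ • v₁)
    (u : Fin d → ℝ) (hu : u ⬝ᵥ u = 1)
    (ξ : ℝ) (hangle : 1 - (u ⬝ᵥ v₁) ^ 2 ≤ ξ)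
    (P : Matrix (Fin d) (Fin d) ℝ) (hP : P = 1 - vecMulVec u u)
    (R : Matrix (Fin d) (Fin d) ℝ) (ν : Fin d → ℝ)
    (hR : Rᵀ * R = 1) (hPSP : P * S * P = R * Matrix.diagonal ν * Rᵀ)
    (hνmono : ∀ i j : Fin d, i ≤ j → ν j ≤ ν i) :
    μ ⟨1, by omega⟩ - μ ⟨2, by omega⟩ -
        2 * (8 * μ ⟨0, by omega⟩ * Real.sqrt ξ * (1 + Real.sqrt ξ)) ≤
      ν ⟨0, by omega⟩ - ν ⟨1, by omega⟩ := by
  set i0 : Fin d := ⟨0, by omega⟩ with hi0def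
  set i1 : Fin d := ⟨1, by omega⟩ with hi1def
  set i2 : Fin d := ⟨2, by omega⟩ with hi2def
  show μ i1 - μ i2 - 2 * (8 * μ i0 * Real.sqrt ξ * (1 + Real.sqrt ξ)) ≤ ν i0 - ν i1
  have hi01 : i0 ≠ i1 := by simp [hi0def, hi1def, Fin.ext_iff]
  have hle01 : i0 ≤ i1 := by simp [hi0def, hi1def, Fin.le_def]
  have hle0 : ∀ i : Fin d, i0 ≤ i := fun i => by simp [hi0def, Fin.le_def]
  -- Cauchy–Schwarz: ξ ≥ 0
  have hcs1 : (u ⬝ᵥ v₁)^2 ≤ 1 := by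
    have := cs_dot u v₁; rw [hu, hv₁] at this; simpa using this
  have hξ0 : 0 ≤ ξ := by linarith
  have hsξ : 0 ≤ Real.sqrt ξ := Real.sqrt_nonneg ξ
  have hν10 : ν i1 ≤ ν i0 := hνmono i0 i1 hle01
  by_cases hbig : μ i1 - μ i2 ≤ 2 * (8 * μ i0 * Real.sqrt ξ * (1 + Real.sqrt ξ))
  · linarith
  push_neg at hbig
  have hμ10 : μ i1 ≤ μ i0 := hμmono i0 i1 hle01
  have hΔ0 : 0 ≤ 2 * (8 * μ i0 * Real.sqrt ξ * (1 + Real.sqrt ξ)) := by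
    have h := hμpos i0
    have e : 2 * (8 * μ i0 * Real.sqrt ξ * (1 + Real.sqrt ξ))
        = 16 * (μ i0 * Real.sqrt ξ) + 16 * (μ i0 * Real.sqrt ξ * Real.sqrt ξ) := by ring
    linarith [mul_nonneg h hsξ, mul_nonneg (mul_nonneg h hsξ) hsξ]
  have hμ21 : μ i2 < μ i1 := by linarith
  -- columns
  set q : Fin d → Fin d → ℝ := fun i j => Q j i with hqdef
  set r : Fin d → Fin d → ℝ := fun i j => R j i with hrdef
  have hquadS : ∀ a b, a ⬝ᵥ (S *ᵥ b) = ∑ i, μ i * (q i ⬝ᵥ a) * (q i ⬝ᵥ b) := fun a b => by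
    rw [hdecomp]; exact quad_form Q μ a b
  have hquadR : ∀ a b, a ⬝ᵥ ((P * S * P) *ᵥ b) = ∑ i, ν i * (r i ⬝ᵥ a) * (r i ⬝ᵥ b) :=
    fun a b => by rw [hPSP]; exact quad_form R ν a b
  have hparQ : ∀ a b : Fin d → ℝ, a ⬝ᵥ b = ∑ i, (q i ⬝ᵥ a) * (q i ⬝ᵥ b) :=
    fun a b => parseval Q hQ a b
  have hparR : ∀ a b : Fin d → ℝ, a ⬝ᵥ b = ∑ i, (r i ⬝ᵥ a) * (r i ⬝ᵥ b) :=
    fun a b => parseval R hR a b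
  have hqq : ∀ i j, q i ⬝ᵥ q j = if i = j then 1 else 0 := by
    intro i j
    have := congrFun (congrFun hQ i) j
    simpa [Matrix.mul_apply, Matrix.transpose_apply, dotProduct, Matrix.one_apply] using this
  have hrr : ∀ i j, r i ⬝ᵥ r j = if i = j then 1 else 0 := by
    intro i j
    have := congrFun (congrFun hR i) j
    simpa [Matrix.mul_apply, Matrix.transpose_apply, dotProduct, Matrix.one_apply] using this
  have hSq : ∀ (i : Fin d) (y : Fin d → ℝ), q i ⬝ᵥ (S *ᵥ y) = μ i * (q i ⬝ᵥ y) := by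
    intro i y
    rw [hquadS (q i) y]
    refine (Finset.sum_eq_single i (fun k _ hk => by simp [hqq, hk]) (by simp)).trans ?_
    simp [hqq]
  clear_value q r
  -- the vector P *ᵥ a, pointwise
  have hPv : ∀ a : Fin d → ℝ, P *ᵥ a = fun j => a j - (u ⬝ᵥ a) * u j := by
    intro a; funext j
    rw [hP, Matrix.sub_mulVec, Matrix.one_mulVec]
    simp only [Pi.sub_apply]
    congr 1
    simp only [Matrix.mulVec, Matrix.vecMulVec_apply, dotProduct, Finset.sum_mul]
    exact Finset.sum_congr rfl fun k _ => by ring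
  have hPsym : ∀ a z : Fin d → ℝ, a ⬝ᵥ (P *ᵥ z) = (P *ᵥ a) ⬝ᵥ z := by
    intro a z
    rw [hPv, hPv, dotProduct_comm a, dot_sub_smul, dot_sub_smul,
      dotProduct_comm z a, dotProduct_comm u a]
    ring
  have hPSPform : ∀ a : Fin d → ℝ,
      a ⬝ᵥ ((P * S * P) *ᵥ a) = (P *ᵥ a) ⬝ᵥ (S *ᵥ (P *ᵥ a)) := by
    intro a
    rw [Matrix.mul_assoc, ← Matrix.mulVec_mulVec, hPsym, ← Matrix.mulVec_mulVec]
  -- eigenvector coordinates of v₁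
  have hvge : ∀ i : Fin d, i ≠ i0 → i ≠ i1 → μ i ≤ μ i2 := by
    intro i h0 h1
    have hval : 2 ≤ (i : ℕ) := by
      rcases Nat.lt_or_ge (i : ℕ) 2 with h | h
      · interval_cases h' : (i : ℕ)
        · exact absurd (Fin.ext h') h0
        · exact absurd (Fin.ext h') h1
      · exact h
    exact hμmono i2 i (by simp [hi2def, Fin.le_def, hval])
  have hqv1 : ∀ i : Fin d, i ≠ i0 → i ≠ i1 → q i ⬝ᵥ v₁ = 0 := by
    intro i h0 h1
    have hlt : μ i < μ i0 := by
      have := hvge i h0 h1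
      linarith
    have e1 : q i ⬝ᵥ (S *ᵥ v₁) = μ i * (q i ⬝ᵥ v₁) := hSq i v₁
    have e2 : q i ⬝ᵥ (S *ᵥ v₁) = μ i0 * (q i ⬝ᵥ v₁) := by
      rw [hev, dotProduct_smul, smul_eq_mul]
    have hz : (μ i - μ i0) * (q i ⬝ᵥ v₁) = 0 := by rw [sub_mul]; linarith
    rcases mul_eq_zero.mp hz with h | h
    · exact absurd h (by intro hh; exact absurd (by linarith : μ i = μ i0) (ne_of_lt hlt))
    · exact h
  -- α, β coordinates of v₁
  set α : ℝ := q i0 ⬝ᵥ v₁ with hαdef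
  set β : ℝ := q i1 ⬝ᵥ v₁ with hβdef
  have hαβ : α^2 + β^2 = 1 := by
    have h := hparQ v₁ v₁
    rw [hv₁, sum_pair_of_vanish _ i0 i1 hi01 (fun i h0 h1 => by rw [hqv1 i h0 h1]; ring)] at h
    rw [← hαdef, ← hβdef] at h
    rw [pow_two, pow_two]; linarith
  -- the second vector v2
  set v2 : Fin d → ℝ := fun j => α * q i1 j - β * q i0 j with hv2def
  have hv2dot : ∀ a, v2 ⬝ᵥ a = α * (q i1 ⬝ᵥ a) - β * (q i0 ⬝ᵥ a) := fun a => by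
    rw [hv2def]; exact dot_comb' (q i1) (q i0) a α β
  clear_value α β
  have hq1v2 : q i1 ⬝ᵥ v2 = α := by
    rw [dotProduct_comm, hv2dot, hqq, hqq]
    simp [hi01, hi01.symm]
  have hq0v2 : q i0 ⬝ᵥ v2 = -β := by
    rw [dotProduct_comm, hv2dot, hqq, hqq]
    simp [hi01, hi01.symm]
  have hv2v2 : v2 ⬝ᵥ v2 = 1 := by
    rw [hv2dot, hq1v2, hq0v2, ← hαβ]
    ring
  have hv1v2 : v₁ ⬝ᵥ v2 = 0 := by
    rw [dotProduct_comm, hv2dot, ← hαdef, ← hβdef]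
    ring
  set c : ℝ := u ⬝ᵥ v₁ with hcdef
  have hc1 : 1 - c^2 ≤ ξ := hangle
  -- |u ⬝ v2|² ≤ ξ
  set tu : ℝ := u ⬝ᵥ v2 with htudef
  have ht2 : tu^2 ≤ ξ := by
    have hsub : ∀ a, (fun j => u j - c * v₁ j) ⬝ᵥ a = u ⬝ᵥ a - c * (v₁ ⬝ᵥ a) := fun a =>
      dot_sub_smul u v₁ a c
    have hv1u : v₁ ⬝ᵥ u = c := dotProduct_comm v₁ u
    have huu' : (fun j => u j - c * v₁ j) ⬝ᵥ (fun j => u j - c * v₁ j) = 1 - c^2 := by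
      rw [hsub, dotProduct_comm u, hsub, dotProduct_comm v₁ (fun j => u j - c * v₁ j), hsub,
        hu, hv₁, hv1u]
      ring
    have huv2 : (fun j => u j - c * v₁ j) ⬝ᵥ v2 = tu := by rw [hsub, hv1v2]; ring
    have := cs_dot (fun j => u j - c * v₁ j) v2
    rw [huu', hv2v2, huv2] at this
    linarith
  -- y = P v2
  set y : Fin d → ℝ := fun j => v2 j - tu * u j with hydef
  have hy : P *ᵥ v2 = y := by rw [hPv]
  have hydot : ∀ a, y ⬝ᵥ a = v2 ⬝ᵥ a - tu * (u ⬝ᵥ a) := fun a => by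
    rw [hydef]; exact dot_sub_smul v2 u a tu
  clear_value v2 y tu c
  -- Part A : μ i1 - 2 μ i0 ξ ≤ ν i0
  have hv2y : v2 ⬝ᵥ y = 1 - tu^2 := by
    rw [dotProduct_comm, hydot, hv2v2, htudef.symm]
    ring
  have hA : μ i1 - 2 * μ i0 * ξ ≤ ν i0 := by
    have h1 : v2 ⬝ᵥ ((P * S * P) *ᵥ v2) ≤ ν i0 := by
      rw [hquadR v2 v2]
      calc ∑ i, ν i * (r i ⬝ᵥ v2) * (r i ⬝ᵥ v2)
          ≤ ∑ i, ν i0 * ((r i ⬝ᵥ v2) * (r i ⬝ᵥ v2)) := by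
            refine Finset.sum_le_sum fun i _ => ?_
            rw [mul_assoc]
            exact mul_le_mul_of_nonneg_right (hνmono i0 i (hle0 i))
              (mul_self_nonneg (r i ⬝ᵥ v2))
        _ = ν i0 := by rw [← Finset.mul_sum, ← hparR v2 v2, hv2v2, mul_one]
    have h2 : v2 ⬝ᵥ ((P * S * P) *ᵥ v2) = y ⬝ᵥ (S *ᵥ y) := by
      rw [hPSPform, hy]
    set f0 : ℝ := q i0 ⬝ᵥ y with hf0def
    set f1 : ℝ := q i1 ⬝ᵥ y with hf1def
    have h3 : μ i0 * (f0 * f0) + μ i1 * (f1 * f1) ≤ y ⬝ᵥ (S *ᵥ y) := by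
      rw [hquadS y y]
      have := Finset.sum_le_sum_of_subset_of_nonneg
        (Finset.subset_univ ({i0, i1} : Finset (Fin d)))
        (f := fun i => μ i * (q i ⬝ᵥ y) * (q i ⬝ᵥ y))
        (fun i _ _ => by
          show 0 ≤ μ i * (q i ⬝ᵥ y) * (q i ⬝ᵥ y)
          rw [mul_assoc]; exact mul_nonneg (hμpos i) (mul_self_nonneg _))
      rw [Finset.sum_pair hi01] at this
      calc μ i0 * (f0 * f0) + μ i1 * (f1 * f1)
          = μ i0 * (q i0 ⬝ᵥ y) * (q i0 ⬝ᵥ y) + μ i1 * (q i1 ⬝ᵥ y) * (q i1 ⬝ᵥ y) := by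
            rw [← hf0def, ← hf1def]; ring
        _ ≤ _ := this
    have h4 : v₁ ⬝ᵥ y = α * f0 + β * f1 := by
      rw [hparQ v₁ y, sum_pair_of_vanish _ i0 i1 hi01
        (fun i h0 h1 => by rw [hqv1 i h0 h1]; ring), ← hαdef, ← hβdef, ← hf0def, ← hf1def]
    have h5 : v2 ⬝ᵥ y = α * f1 - β * f0 := by
      rw [hv2dot, ← hf0def, ← hf1def]
    have h6 : f0^2 + f1^2 = (v₁ ⬝ᵥ y)^2 + (v2 ⬝ᵥ y)^2 := by
      rw [h4, h5]; linear_combination (-(f0^2) - f1^2) * hαβ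
    have h7 : (1 - tu^2)^2 ≤ f0^2 + f1^2 := by
      rw [h6, ← hv2y]; linarith [sq_nonneg (v₁ ⬝ᵥ y)]
    have h8 : μ i1 * (1 - tu^2)^2 ≤ μ i0 * (f0 * f0) + μ i1 * (f1 * f1) := by
      have e1 := mul_le_mul_of_nonneg_left h7 (hμpos i1)
      have e2 := mul_le_mul_of_nonneg_right hμ10 (sq_nonneg f0)
      have e3 : μ i1 * (f0^2 + f1^2) = μ i1 * f0^2 + μ i1 * f1^2 := by ring
      have e4 : μ i0 * (f0 * f0) = μ i0 * f0^2 := by ring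
      have e5 : μ i1 * (f1 * f1) = μ i1 * f1^2 := by ring
      linarith
    have h9 : μ i1 - 2 * μ i0 * ξ ≤ μ i1 * (1 - tu^2)^2 := by
      have e : μ i1 * (1 - tu^2)^2 = μ i1 - 2*(μ i1 * tu^2) + μ i1 * (tu^2)^2 := by ring
      have e1 := mul_le_mul_of_nonneg_left ht2 (hμpos i1)
      have e2 := mul_le_mul_of_nonneg_right hμ10 hξ0
      have e3 := mul_nonneg (hμpos i1) (sq_nonneg (tu^2))
      linarith
    linarith
  -- Part B : ν i1 ≤ μ i2 + μ i0 * ξ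
  set p0 : ℝ := r i0 ⬝ᵥ y with hp0def
  set p1 : ℝ := r i1 ⬝ᵥ y with hp1def
  obtain ⟨c0, c1, hcpos, hcorth⟩ : ∃ c0 c1 : ℝ, 0 < c0^2 + c1^2 ∧ c0 * p0 + c1 * p1 = 0 := by
    by_cases h : p0 = 0 ∧ p1 = 0
    · exact ⟨1, 0, by norm_num, by rw [h.1, h.2]; ring⟩
    · refine ⟨p1, -p0, ?_, by ring⟩
      rcases not_and_or.mp h with h | h
      · have : 0 < p0^2 := lt_of_le_of_ne (sq_nonneg p0) (Ne.symm (pow_ne_zero 2 h))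
        have := sq_nonneg p1
        nlinarith
      · have : 0 < p1^2 := lt_of_le_of_ne (sq_nonneg p1) (Ne.symm (pow_ne_zero 2 h))
        have := sq_nonneg p0
        nlinarith
  set w : Fin d → ℝ := fun j => c0 * r i0 j + c1 * r i1 j with hwdef
  have hwdot : ∀ a, w ⬝ᵥ a = c0 * (r i0 ⬝ᵥ a) + c1 * (r i1 ⬝ᵥ a) := fun a => by
    rw [hwdef]; exact dot_comb (r i0) (r i1) a c0 c1
  clear_value w
  have hrw0 : r i0 ⬝ᵥ w = c0 := by
    rw [dotProduct_comm, hwdot, hrr, hrr]; simp [hi01, hi01.symm]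
  have hrw1 : r i1 ⬝ᵥ w = c1 := by
    rw [dotProduct_comm, hwdot, hrr, hrr]; simp [hi01, hi01.symm]
  have hrwo : ∀ i, i ≠ i0 → i ≠ i1 → r i ⬝ᵥ w = 0 := by
    intro i h0 h1
    rw [dotProduct_comm, hwdot, hrr, hrr]
    simp [Ne.symm h0, Ne.symm h1]
  have hww : w ⬝ᵥ w = c0^2 + c1^2 := by
    rw [hparR w w, sum_pair_of_vanish _ i0 i1 hi01
      (fun i h0 h1 => by rw [hrwo i h0 h1]; ring), hrw0, hrw1]
    ring
  have hBl : ν i1 * (c0^2 + c1^2) ≤ w ⬝ᵥ ((P * S * P) *ᵥ w) := by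
    rw [hquadR w w, sum_pair_of_vanish _ i0 i1 hi01
      (fun i h0 h1 => by rw [hrwo i h0 h1]; ring), hrw0, hrw1]
    have e1 := mul_le_mul_of_nonneg_right hν10 (sq_nonneg c0)
    have e2 : ν i0 * c0 * c0 = ν i0 * c0^2 := by ring
    have e3 : ν i1 * c1 * c1 = ν i1 * c1^2 := by ring
    have e4 : ν i1 * (c0^2 + c1^2) = ν i1 * c0^2 + ν i1 * c1^2 := by ring
    linarith
  set sc : ℝ := u ⬝ᵥ w with hscdef
  set x : Fin d → ℝ := fun j => w j - sc * u j with hxdef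
  have hx : P *ᵥ w = x := by rw [hPv]
  have hxdot : ∀ a, x ⬝ᵥ a = w ⬝ᵥ a - sc * (u ⬝ᵥ a) := fun a => by
    rw [hxdef]; exact dot_sub_smul w u a sc
  clear_value x sc
  have hxu : x ⬝ᵥ u = 0 := by
    rw [hxdot, hu, dotProduct_comm w u, hscdef.symm]; ring
  have hxw : x ⬝ᵥ w = c0^2 + c1^2 - sc * sc := by
    rw [hxdot, hww, hscdef.symm]
  have hxx : x ⬝ᵥ x ≤ c0^2 + c1^2 := by
    have h1 : x ⬝ᵥ x = c0^2 + c1^2 - sc * sc - sc * 0 := by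
      rw [hxdot x, dotProduct_comm w x, hxw, dotProduct_comm u x, hxu]
    rw [h1]
    have := mul_self_nonneg sc
    linarith
  set e0 : ℝ := q i0 ⬝ᵥ x with he0def
  set e1 : ℝ := q i1 ⬝ᵥ x with he1def
  have hup : ∑ i, μ i * (q i ⬝ᵥ x) * (q i ⬝ᵥ x)
      ≤ μ i2 * (x ⬝ᵥ x) + ((μ i0 - μ i2) * (e0 * e0) + (μ i1 - μ i2) * (e1 * e1)) := by
    have hs1 : ∑ i, (μ i - μ i2) * ((q i ⬝ᵥ x) * (q i ⬝ᵥ x))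
        ≤ (μ i0 - μ i2) * (e0 * e0) + (μ i1 - μ i2) * (e1 * e1) := by
      have h := Finset.sum_le_sum_of_subset_of_nonneg
        (Finset.subset_univ ({i0, i1} : Finset (Fin d)))
        (f := fun i => -((μ i - μ i2) * ((q i ⬝ᵥ x) * (q i ⬝ᵥ x))))
        (fun i _ hi => by
          show 0 ≤ -((μ i - μ i2) * ((q i ⬝ᵥ x) * (q i ⬝ᵥ x)))
          simp only [Finset.mem_insert, Finset.mem_singleton] at hi
          push_neg at hi
          have hmu := hvge i hi.1 hi.2
          have hpr := mul_nonneg (by linarith : (0:ℝ) ≤ μ i2 - μ i)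
            (mul_self_nonneg (q i ⬝ᵥ x))
          have he : -((μ i - μ i2) * ((q i ⬝ᵥ x) * (q i ⬝ᵥ x)))
              = (μ i2 - μ i) * ((q i ⬝ᵥ x) * (q i ⬝ᵥ x)) := by ring
          linarith)
      rw [Finset.sum_pair hi01, Finset.sum_neg_distrib] at h
      rw [← he0def, ← he1def] at h
      linarith
    have hs2 : ∑ i, μ i * (q i ⬝ᵥ x) * (q i ⬝ᵥ x)
        = μ i2 * (x ⬝ᵥ x) + ∑ i, (μ i - μ i2) * ((q i ⬝ᵥ x) * (q i ⬝ᵥ x)) := by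
      rw [hparQ x x, Finset.mul_sum, ← Finset.sum_add_distrib]
      exact Finset.sum_congr rfl fun i _ => by ring
    linarith
  have hv2x : v2 ⬝ᵥ x = 0 := by
    have h1 : v2 ⬝ᵥ (P *ᵥ w) = (P *ᵥ v2) ⬝ᵥ w := hPsym v2 w
    rw [hx, hy] at h1
    rw [h1, hparR y w, sum_pair_of_vanish _ i0 i1 hi01
      (fun i h0 h1 => by rw [hrwo i h0 h1]; ring), hrw0, hrw1, ← hp0def, ← hp1def]
    linarith [hcorth]
  have hv1u2 : v₁ ⬝ᵥ u = c := by rw [dotProduct_comm]; exact hcdef.symm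
  have hv1x2 : (v₁ ⬝ᵥ x)^2 ≤ ξ * (c0^2 + c1^2) := by
    have h1 : v₁ ⬝ᵥ (P *ᵥ w) = (P *ᵥ v₁) ⬝ᵥ w := hPsym v₁ w
    rw [hx] at h1
    have hPv1 : P *ᵥ v₁ = fun j => v₁ j - c * u j := by rw [hPv, hcdef]
    have hsubv : ∀ a, (fun j => v₁ j - c * u j) ⬝ᵥ a = v₁ ⬝ᵥ a - c * (u ⬝ᵥ a) :=
      fun a => dot_sub_smul v₁ u a c
    have hPP : (fun j => v₁ j - c * u j) ⬝ᵥ (fun j => v₁ j - c * u j) = 1 - c^2 := by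
      rw [hsubv, dotProduct_comm v₁ (fun j => v₁ j - c * u j), hsubv,
        dotProduct_comm u (fun j => v₁ j - c * u j), hsubv, hv₁, hu, hv1u2, hcdef.symm]
      ring
    have hcs := cs_dot (fun j => v₁ j - c * u j) w
    rw [hPP, hww] at hcs
    have h2 : (v₁ ⬝ᵥ x)^2 ≤ (1 - c^2) * (c0^2 + c1^2) := by
      rw [h1, hPv1]; exact hcs
    have h3 := mul_le_mul_of_nonneg_right hc1 (le_of_lt hcpos)
    linarith
  have h4x : v₁ ⬝ᵥ x = α * e0 + β * e1 := by
    rw [hparQ v₁ x, sum_pair_of_vanish _ i0 i1 hi01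
      (fun i h0 h1 => by rw [hqv1 i h0 h1]; ring), ← hαdef, ← hβdef, ← he0def, ← he1def]
  have h5x : v2 ⬝ᵥ x = α * e1 - β * e0 := by
    rw [hv2dot, ← he0def, ← he1def]
  have hid : e0^2 + e1^2 = (v₁ ⬝ᵥ x)^2 + (v2 ⬝ᵥ x)^2 := by
    rw [h4x, h5x]; linear_combination (-(e0^2) - e1^2) * hαβ
  have he01 : e0 * e0 + e1 * e1 ≤ ξ * (c0^2 + c1^2) := by
    rw [hv2x] at hid
    have q0 : e0 * e0 = e0^2 := by ring
    have q1 : e1 * e1 = e1^2 := by ring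
    have q2 : (0:ℝ)^2 = 0 := by norm_num
    rw [q2] at hid
    linarith
  have hB : ν i1 ≤ μ i2 + μ i0 * ξ := by
    have t1 : w ⬝ᵥ ((P * S * P) *ᵥ w) = ∑ i, μ i * (q i ⬝ᵥ x) * (q i ⬝ᵥ x) := by
      rw [hPSPform, hx, hquadS]
    have t2 : μ i2 * (x ⬝ᵥ x) ≤ μ i2 * (c0^2 + c1^2) :=
      mul_le_mul_of_nonneg_left hxx (hμpos i2)
    have t3 : (μ i0 - μ i2) * (e0 * e0) + (μ i1 - μ i2) * (e1 * e1)
        ≤ μ i0 * (e0 * e0 + e1 * e1) := by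
      have b2 := mul_le_mul_of_nonneg_right
        (by linarith [hμpos i2, hμ10] : μ i1 - μ i2 ≤ μ i0) (mul_self_nonneg e1)
      have b3 := mul_le_mul_of_nonneg_right
        (by linarith [hμpos i2] : μ i0 - μ i2 ≤ μ i0) (mul_self_nonneg e0)
      have b4 : μ i0 * (e0 * e0 + e1 * e1) = μ i0 * (e0 * e0) + μ i0 * (e1 * e1) := by ring
      linarith
    have t4 := mul_le_mul_of_nonneg_left he01 (hμpos i0)
    have t5 := hBl
    rw [t1] at t5
    have e : (μ i2 + μ i0 * ξ) * (c0^2 + c1^2)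
        = μ i2 * (c0^2 + c1^2) + μ i0 * (ξ * (c0^2 + c1^2)) := by ring
    have hchain : ν i1 * (c0^2 + c1^2) ≤ (μ i2 + μ i0 * ξ) * (c0^2 + c1^2) := by linarith
    exact le_of_mul_le_mul_right hchain hcpos
  -- finish
  have hsq : Real.sqrt ξ * Real.sqrt ξ = ξ := Real.mul_self_sqrt hξ0
  have m1 : 0 ≤ μ i0 * Real.sqrt ξ := mul_nonneg (hμpos i0) hsξ
  have m2 : 0 ≤ μ i0 * ξ := mul_nonneg (hμpos i0) hξ0
  have efin : 2 * (8 * μ i0 * Real.sqrt ξ * (1 + Real.sqrt ξ))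
      = 16 * (μ i0 * Real.sqrt ξ) + 16 * (μ i0 * (Real.sqrt ξ * Real.sqrt ξ)) := by ring
  rw [hsq] at efin
  linarith
end

section
/- Let A be an integrable d×d real random matrix and let P be a random d×d orthogonal projection matrix (P = Pᵀ and P² = P almost surely) independent of A, with A Aᵀ integrable. Then ‖E[P A P Aᵀ P]‖₂ ≤ ‖E[A Aᵀ]‖₂. -/
open Matrix MeasureTheory ProbabilityTheory
open scoped Matrix.Norms.L2Operator RealInnerProductSpace

/-- Matrices inherit the (Borel/pi) measurable-space structure of functions. -/
noncomputable instance matrixMeasurableSpace {m n α : Type*} [MeasurableSpace α] :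
    MeasurableSpace (Matrix m n α) :=
  (inferInstance : MeasurableSpace (m → n → α))

section Aux

variable {d : ℕ}

lemma dot_self_nonneg' (v : Fin d → ℝ) : 0 ≤ v ⬝ᵥ v :=
  Finset.sum_nonneg fun _ _ => mul_self_nonneg _

lemma quad_expand (v : Fin d → ℝ) (W : Matrix (Fin d) (Fin d) ℝ) :
    v ⬝ᵥ W *ᵥ v = ∑ i, ∑ j, v i * v j * W i j := by
  simp only [dotProduct, mulVec]
  refine Finset.sum_congr rfl fun i _ => ?_
  rw [Finset.mul_sum]
  exact Finset.sum_congr rfl fun j _ => by ring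

lemma dot_mul_transpose (B : Matrix (Fin d) (Fin d) ℝ) (x : Fin d → ℝ) :
    x ⬝ᵥ (B * Bᵀ) *ᵥ x = (Bᵀ *ᵥ x) ⬝ᵥ (Bᵀ *ᵥ x) := by
  rw [← mulVec_mulVec, dotProduct_mulVec, mulVec_transpose]

lemma proj_contract {p : Matrix (Fin d) (Fin d) ℝ} (h1 : pᵀ = p) (h2 : p * p = p)
    (y : Fin d → ℝ) : (p *ᵥ y) ⬝ᵥ (p *ᵥ y) ≤ y ⬝ᵥ y := by
  have key : ∀ q : Matrix (Fin d) (Fin d) ℝ, qᵀ = q → q * q = q →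
      (q *ᵥ y) ⬝ᵥ (q *ᵥ y) = y ⬝ᵥ (q *ᵥ y) := by
    intro q hq1 hq2
    have := dot_mul_transpose qᵀ y
    rw [transpose_transpose, hq1, hq2] at this
    exact this.symm
  have hk := key p h1 h2
  set q : Matrix (Fin d) (Fin d) ℝ := 1 - p with hq
  have hq1 : qᵀ = q := by simp [hq, transpose_sub, h1]
  have hq2 : q * q = q := by
    simp [hq, sub_mul, mul_sub, h2]
  have h0 : 0 ≤ y ⬝ᵥ (q *ᵥ y) := by
    rw [← key q hq1 hq2]
    exact dot_self_nonneg' _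
  have : y ⬝ᵥ (q *ᵥ y) = y ⬝ᵥ y - y ⬝ᵥ (p *ᵥ y) := by
    simp [hq, sub_mulVec, dotProduct_sub]
  rw [hk]
  linarith [this ▸ h0]

lemma inner_dot' (u v : Fin d → ℝ) :
    ⟪(WithLp.equiv 2 (Fin d → ℝ)).symm u, (WithLp.equiv 2 (Fin d → ℝ)).symm v⟫ = u ⬝ᵥ v := by
  simp [PiLp.inner_apply, RCLike.inner_apply, starRingEnd_apply,
    dotProduct, mul_comm]

lemma quadform_le_opnorm (S : Matrix (Fin d) (Fin d) ℝ) (u : Fin d → ℝ) :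
    u ⬝ᵥ S *ᵥ u ≤ ‖S‖ * (u ⬝ᵥ u) := by
  set e : EuclideanSpace ℝ (Fin d) := (WithLp.equiv 2 (Fin d → ℝ)).symm u with he
  set f : EuclideanSpace ℝ (Fin d) := (WithLp.equiv 2 (Fin d → ℝ)).symm (S *ᵥ u) with hf
  have h1 : u ⬝ᵥ S *ᵥ u = ⟪e, f⟫ := (inner_dot' u (S *ᵥ u)).symm
  have h2 : ⟪e, f⟫ ≤ ‖e‖ * ‖f‖ := real_inner_le_norm e f
  have h3 : ‖f‖ ≤ ‖S‖ * ‖e‖ := S.l2_opNorm_mulVec e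
  have h4 : ‖e‖ * ‖e‖ = u ⬝ᵥ u := by
    rw [← real_inner_self_eq_norm_mul_norm]; exact inner_dot' u u
  calc u ⬝ᵥ S *ᵥ u = ⟪e, f⟫ := h1
    _ ≤ ‖e‖ * ‖f‖ := h2
    _ ≤ ‖e‖ * (‖S‖ * ‖e‖) := by
        exact mul_le_mul_of_nonneg_left h3 (norm_nonneg _)
    _ = ‖S‖ * (‖e‖ * ‖e‖) := by ring
    _ = ‖S‖ * (u ⬝ᵥ u) := by rw [h4]

set_option maxHeartbeats 1000000 in
lemma opnorm_le_of_quadform (M : Matrix (Fin d) (Fin d) ℝ) (hsym : Mᵀ = M) {c : ℝ}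
    (hc : 0 ≤ c) (h0 : ∀ x, 0 ≤ x ⬝ᵥ M *ᵥ x) (hq : ∀ x, x ⬝ᵥ M *ᵥ x ≤ c * (x ⬝ᵥ x)) :
    ‖M‖ ≤ c := by
  -- Cauchy–Schwarz for the PSD bilinear form
  have hCS : ∀ x y : Fin d → ℝ,
      (x ⬝ᵥ M *ᵥ y) * (x ⬝ᵥ M *ᵥ y) ≤ (x ⬝ᵥ M *ᵥ x) * (y ⬝ᵥ M *ᵥ y) := by
    intro x y
    have hpos : ∀ t : ℝ, 0 ≤ (y ⬝ᵥ M *ᵥ y) * (t * t) + 2 * (x ⬝ᵥ M *ᵥ y) * t + x ⬝ᵥ M *ᵥ x := by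
      intro t
      have hexp : (y ⬝ᵥ M *ᵥ y) * (t * t) + 2 * (x ⬝ᵥ M *ᵥ y) * t + x ⬝ᵥ M *ᵥ x
          = (x + t • y) ⬝ᵥ M *ᵥ (x + t • y) := by
        have hsymq : y ⬝ᵥ M *ᵥ x = x ⬝ᵥ M *ᵥ y := by
          rw [dotProduct_mulVec, ← mulVec_transpose, hsym, dotProduct_comm]
        rw [mulVec_add, mulVec_smul, dotProduct_add, add_dotProduct, add_dotProduct,
          smul_dotProduct, dotProduct_smul, smul_dotProduct, dotProduct_smul, hsymq]
        simp only [smul_eq_mul]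
        ring
      rw [hexp]
      exact h0 _
    have hdisc := discrim_le_zero hpos
    unfold discrim at hdisc
    nlinarith [hdisc]
  -- pointwise bound on the image vector
  have hMx : ∀ x : Fin d → ℝ, (M *ᵥ x) ⬝ᵥ (M *ᵥ x) ≤ (c * c) * (x ⬝ᵥ x) := by
    intro x
    set s := (M *ᵥ x) ⬝ᵥ (M *ᵥ x) with hs
    have hvm : x ᵥ* M = M *ᵥ x := by
      rw [← vecMul_transpose]; rw [hsym]
    have hsx : x ⬝ᵥ M *ᵥ (M *ᵥ x) = s := by
      rw [dotProduct_mulVec, hvm, hs]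
    have h1 : s * s ≤ (x ⬝ᵥ M *ᵥ x) * ((M *ᵥ x) ⬝ᵥ M *ᵥ (M *ᵥ x)) := by
      rw [← hsx]; exact hCS x (M *ᵥ x)
    have h2 : (x ⬝ᵥ M *ᵥ x) * ((M *ᵥ x) ⬝ᵥ M *ᵥ (M *ᵥ x)) ≤
        (c * (x ⬝ᵥ x)) * (c * ((M *ᵥ x) ⬝ᵥ (M *ᵥ x))) :=
      mul_le_mul (hq x) (hq (M *ᵥ x)) (h0 _) (le_trans (h0 x) (hq x))
    have hsnn : 0 ≤ s := dot_self_nonneg' _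
    have hxnn : 0 ≤ x ⬝ᵥ x := dot_self_nonneg' _
    rcases eq_or_lt_of_le hsnn with h | h
    · rw [← h]; positivity
    · have : s * s ≤ ((c * c) * (x ⬝ᵥ x)) * s := by
        calc s * s ≤ (c * (x ⬝ᵥ x)) * (c * s) := le_trans h1 h2
          _ = ((c * c) * (x ⬝ᵥ x)) * s := by ring
      exact le_of_mul_le_mul_right (by simpa [mul_comm] using this) h
  rw [Matrix.l2_opNorm_def]
  refine ContinuousLinearMap.opNorm_le_bound _ hc fun x => ?_
  set u : Fin d → ℝ := WithLp.equiv 2 (Fin d → ℝ) x with hu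
  have hx : x = (WithLp.equiv 2 (Fin d → ℝ)).symm u := rfl
  have happ : ((Matrix.toEuclideanLin.trans LinearMap.toContinuousLinearMap) M) x =
      (WithLp.equiv 2 (Fin d → ℝ)).symm (M *ᵥ u) := rfl
  have hnorm1 : ‖((Matrix.toEuclideanLin.trans LinearMap.toContinuousLinearMap) M) x‖ *
      ‖((Matrix.toEuclideanLin.trans LinearMap.toContinuousLinearMap) M) x‖
      = (M *ᵥ u) ⬝ᵥ (M *ᵥ u) := by
    rw [← real_inner_self_eq_norm_mul_norm, happ]
    exact inner_dot' _ _
  have hnorm2 : ‖x‖ * ‖x‖ = u ⬝ᵥ u := by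
    rw [← real_inner_self_eq_norm_mul_norm, hx]
    exact inner_dot' _ _
  nlinarith [hMx u,
    norm_nonneg (((Matrix.toEuclideanLin.trans LinearMap.toContinuousLinearMap) M) x),
    norm_nonneg x, mul_nonneg hc (norm_nonneg x)]

variable {Ω : Type*} [MeasurableSpace Ω] {μ : MeasureTheory.Measure Ω}

lemma integrable_quadform {F : Ω → Matrix (Fin d) (Fin d) ℝ}
    (hF : ∀ i j, Integrable (fun ω => F ω i j) μ) (x : Fin d → ℝ) :
    Integrable (fun ω => x ⬝ᵥ F ω *ᵥ x) μ := by
  have : (fun ω => x ⬝ᵥ F ω *ᵥ x) = fun ω => ∑ i, ∑ j, x i * x j * F ω i j :=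
    funext fun ω => quad_expand x (F ω)
  rw [this]
  exact integrable_finset_sum _ fun i _ =>
    integrable_finset_sum _ fun j _ => (hF i j).const_mul _

lemma integral_quadform {F : Ω → Matrix (Fin d) (Fin d) ℝ}
    (hF : ∀ i j, Integrable (fun ω => F ω i j) μ) (x : Fin d → ℝ) :
    x ⬝ᵥ (Matrix.of fun i j => ∫ ω, F ω i j ∂μ) *ᵥ x = ∫ ω, x ⬝ᵥ F ω *ᵥ x ∂μ := by
  have e1 : (fun ω => x ⬝ᵥ F ω *ᵥ x) = fun ω => ∑ i, ∑ j, x i * x j * F ω i j :=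
    funext fun ω => quad_expand x (F ω)
  rw [quad_expand, e1,
    integral_finset_sum _ (fun i _ => integrable_finset_sum _ fun j _ => (hF i j).const_mul _)]
  refine Finset.sum_congr rfl fun i _ => ?_
  rw [integral_finset_sum _ (fun j _ => (hF i j).const_mul _)]
  refine Finset.sum_congr rfl fun j _ => ?_
  rw [integral_const_mul]
  simp [Matrix.of_apply]

end Aux

/-- **Expected operator norm under an independent random projection.**
Let `A` be an integrable `d × d` real random matrix and `P` a random orthogonal
projection matrix (`Pᵀ = P`, `P² = P` almost surely) independent of `A`, with
`A Aᵀ` (and the sandwiched product) integrable.  Then, with `E[·]` denoting the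
entrywise expectation, `‖E[P A P Aᵀ P]‖₂ ≤ ‖E[A Aᵀ]‖₂`. -/
theorem opNorm_expectation_proj_le {d : ℕ} {Ω : Type*} [MeasurableSpace Ω]
    (μ : Measure Ω) [IsProbabilityMeasure μ]
    (A P : Ω → Matrix (Fin d) (Fin d) ℝ)
    (hAmeas : Measurable A) (hPmeas : Measurable P)
    (hproj : ∀ᵐ ω ∂μ, (P ω)ᵀ = P ω ∧ P ω * P ω = P ω)
    (hindep : IndepFun A P μ)
    (hAint : ∀ i j, Integrable (fun ω => A ω i j) μ)
    (hAAint : ∀ i j, Integrable (fun ω => (A ω * (A ω)ᵀ) i j) μ)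
    (hPAPint : ∀ i j,
      Integrable (fun ω => (P ω * A ω * P ω * (A ω)ᵀ * P ω) i j) μ) :
    ‖Matrix.of fun i j => ∫ ω, (P ω * A ω * P ω * (A ω)ᵀ * P ω) i j ∂μ‖ ≤
      ‖Matrix.of fun i j => ∫ ω, (A ω * (A ω)ᵀ) i j ∂μ‖ := by
  set S : Matrix (Fin d) (Fin d) ℝ := Matrix.of fun i j => ∫ ω, (A ω * (A ω)ᵀ) i j ∂μ with hS
  set Mm : Matrix (Fin d) (Fin d) ℝ :=
    Matrix.of fun i j => ∫ ω, (P ω * A ω * P ω * (A ω)ᵀ * P ω) i j ∂μ with hMm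
  -- entry measurability
  have em : ∀ i j : Fin d, Measurable fun m : Matrix (Fin d) (Fin d) ℝ => m i j :=
    fun i j => (measurable_pi_apply j).comp (measurable_pi_apply i)
  have hPe : ∀ i j, Measurable fun ω => P ω i j := fun i j => (em i j).comp hPmeas
  -- the sandwiched matrix as `B * Bᵀ`
  have hGBB : ∀ ω, (P ω)ᵀ = P ω → P ω * P ω = P ω →
      P ω * A ω * P ω * (A ω)ᵀ * P ω = (P ω * A ω * P ω) * (P ω * A ω * P ω)ᵀ := by
    intro ω h1 h2
    have : (P ω * A ω * P ω) * (P ω * A ω * P ω)ᵀ = P ω * A ω * P ω * (A ω)ᵀ * P ω := by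
      rw [transpose_mul, transpose_mul, h1]
      rw [← Matrix.mul_assoc, ← Matrix.mul_assoc, Matrix.mul_assoc (P ω * A ω) (P ω) (P ω), h2]
    exact this.symm
  -- symmetry of Mm
  have hsym : Mmᵀ = Mm := by
    ext i j
    simp only [hMm, transpose_apply, Matrix.of_apply]
    refine integral_congr_ae ?_
    filter_upwards [hproj] with ω hω
    have ht : (P ω * A ω * P ω * (A ω)ᵀ * P ω)ᵀ = P ω * A ω * P ω * (A ω)ᵀ * P ω := by
      simp only [transpose_mul, transpose_transpose, hω.1, Matrix.mul_assoc]
    conv_rhs => rw [← ht]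
    rw [transpose_apply]
  -- nonnegativity of the quadratic form of Mm
  have h0 : ∀ x : Fin d → ℝ, 0 ≤ x ⬝ᵥ Mm *ᵥ x := by
    intro x
    rw [hMm, integral_quadform hPAPint x]
    refine integral_nonneg_of_ae ?_
    filter_upwards [hproj] with ω hω
    rw [hGBB ω hω.1 hω.2, dot_mul_transpose]
    exact dot_self_nonneg' _
  -- the main quadratic form bound
  have hq : ∀ x : Fin d → ℝ, x ⬝ᵥ Mm *ᵥ x ≤ ‖S‖ * (x ⬝ᵥ x) := by
    intro x
    set u : Ω → Fin d → ℝ := fun ω => P ω *ᵥ x with hu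
    have humeas : ∀ i, Measurable fun ω => u ω i := by
      intro i
      have : (fun ω => u ω i) = fun ω => ∑ j, P ω i j * x j := by
        funext ω; simp [hu, mulVec, dotProduct]
      rw [this]
      exact Finset.measurable_sum _ fun j _ => (hPe i j).mul_const _
    have hubd : ∀ᵐ ω ∂μ, ∀ i j, |u ω i * u ω j| ≤ x ⬝ᵥ x := by
      filter_upwards [hproj] with ω hω
      intro i j
      have hsum : u ω ⬝ᵥ u ω ≤ x ⬝ᵥ x := proj_contract hω.1 hω.2 x
      have hterm : ∀ k, u ω k * u ω k ≤ x ⬝ᵥ x := fun k =>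
        le_trans (Finset.single_le_sum (f := fun k => u ω k * u ω k)
          (fun _ _ => mul_self_nonneg _) (Finset.mem_univ k)) hsum
      rw [abs_mul]
      nlinarith [hterm i, hterm j, sq_nonneg (|u ω i| - |u ω j|), sq_abs (u ω i),
        sq_abs (u ω j), abs_nonneg (u ω i), abs_nonneg (u ω j)]
    have huint : ∀ i j, Integrable (fun ω => u ω i * u ω j) μ := by
      intro i j
      refine Integrable.mono' (integrable_const (x ⬝ᵥ x))
        (((humeas i).mul (humeas j)).aestronglyMeasurable) ?_
      filter_upwards [hubd] with ω h using by rw [Real.norm_eq_abs]; exact h i j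
    have hAAe : ∀ i j, Measurable fun m : Matrix (Fin d) (Fin d) ℝ => (m * mᵀ) i j := by
      intro i j
      have : (fun m : Matrix (Fin d) (Fin d) ℝ => (m * mᵀ) i j)
          = fun m => ∑ k, m i k * m j k := by
        funext m; simp [Matrix.mul_apply]
      rw [this]
      exact Finset.measurable_sum _ fun k _ => (em i k).mul (em j k)
    have hPue : ∀ i j, Measurable fun m : Matrix (Fin d) (Fin d) ℝ =>
        (m *ᵥ x) i * (m *ᵥ x) j := by
      have h1 : ∀ i : Fin d, Measurable fun m : Matrix (Fin d) (Fin d) ℝ => (m *ᵥ x) i := by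
        intro i
        have : (fun m : Matrix (Fin d) (Fin d) ℝ => (m *ᵥ x) i)
            = fun m => ∑ k, m i k * x k := by
          funext m; simp [mulVec, dotProduct]
        rw [this]
        exact Finset.measurable_sum _ fun k _ => (em i k).mul_const _
      exact fun i j => (h1 i).mul (h1 j)
    have hind : ∀ i j k l : Fin d,
        IndepFun (fun ω => u ω i * u ω j) (fun ω => (A ω * (A ω)ᵀ) k l) μ :=
      fun i j k l => ((hindep.comp (hAAe k l) (hPue i j)).symm :)
    have hprod_int : ∀ i j, Integrable (fun ω => u ω i * u ω j * (A ω * (A ω)ᵀ) i j) μ :=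
      fun i j => (hind i j i j).integrable_mul (huint i j) (hAAint i j)
    have hg2_int : Integrable (fun ω => u ω ⬝ᵥ (A ω * (A ω)ᵀ) *ᵥ u ω) μ := by
      have : (fun ω => u ω ⬝ᵥ (A ω * (A ω)ᵀ) *ᵥ u ω)
          = fun ω => ∑ i, ∑ j, u ω i * u ω j * (A ω * (A ω)ᵀ) i j :=
        funext fun ω => quad_expand _ _
      rw [this]
      exact integrable_finset_sum _ fun i _ => integrable_finset_sum _ fun j _ => hprod_int i j
    have hg3_int : Integrable (fun ω => u ω ⬝ᵥ S *ᵥ u ω) μ := by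
      have : (fun ω => u ω ⬝ᵥ S *ᵥ u ω) = fun ω => ∑ i, ∑ j, u ω i * u ω j * S i j :=
        funext fun ω => quad_expand _ _
      rw [this]
      exact integrable_finset_sum _ fun i _ =>
        integrable_finset_sum _ fun j _ => (huint i j).mul_const _
    have step_a : ∫ ω, x ⬝ᵥ (P ω * A ω * P ω * (A ω)ᵀ * P ω) *ᵥ x ∂μ
        ≤ ∫ ω, u ω ⬝ᵥ (A ω * (A ω)ᵀ) *ᵥ u ω ∂μ := by
      refine integral_mono_ae (integrable_quadform hPAPint x) hg2_int ?_
      filter_upwards [hproj] with ω hω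
      rw [hGBB ω hω.1 hω.2, dot_mul_transpose]
      have hBt : (P ω * A ω * P ω)ᵀ *ᵥ x = P ω *ᵥ ((A ω)ᵀ *ᵥ u ω) := by
        rw [transpose_mul, transpose_mul, hω.1, ← mulVec_mulVec, ← mulVec_mulVec]
      rw [hBt]
      calc (P ω *ᵥ ((A ω)ᵀ *ᵥ u ω)) ⬝ᵥ (P ω *ᵥ ((A ω)ᵀ *ᵥ u ω))
          ≤ ((A ω)ᵀ *ᵥ u ω) ⬝ᵥ ((A ω)ᵀ *ᵥ u ω) := proj_contract hω.1 hω.2 _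
        _ = u ω ⬝ᵥ (A ω * (A ω)ᵀ) *ᵥ u ω := (dot_mul_transpose (A ω) (u ω)).symm
    have step_b : ∫ ω, u ω ⬝ᵥ (A ω * (A ω)ᵀ) *ᵥ u ω ∂μ = ∫ ω, u ω ⬝ᵥ S *ᵥ u ω ∂μ := by
      have e2 : (fun ω => u ω ⬝ᵥ (A ω * (A ω)ᵀ) *ᵥ u ω)
          = fun ω => ∑ i, ∑ j, u ω i * u ω j * (A ω * (A ω)ᵀ) i j :=
        funext fun ω => quad_expand _ _
      have e3 : (fun ω => u ω ⬝ᵥ S *ᵥ u ω) = fun ω => ∑ i, ∑ j, u ω i * u ω j * S i j :=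
        funext fun ω => quad_expand _ _
      rw [e2, e3,
        integral_finset_sum _
          (fun i _ => integrable_finset_sum _ fun j _ => hprod_int i j),
        integral_finset_sum _ (f := fun i ω => ∑ j, u ω i * u ω j * S i j)
          (fun i _ => integrable_finset_sum _ fun j _ => (huint i j).mul_const _)]
      refine Finset.sum_congr rfl fun i _ => ?_
      rw [integral_finset_sum _ (fun j _ => hprod_int i j),
        integral_finset_sum _ (fun j _ => (huint i j).mul_const _)]
      refine Finset.sum_congr rfl fun j _ => ?_
      conv_rhs => rw [integral_mul_const]
      exact (hind i j i j).integral_mul_eq_mul_integral (huint i j).aestronglyMeasurable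
        (hAAint i j).aestronglyMeasurable
    have step_d : ∫ ω, u ω ⬝ᵥ S *ᵥ u ω ∂μ ≤ ‖S‖ * (x ⬝ᵥ x) := by
      have hb : ∀ᵐ ω ∂μ, u ω ⬝ᵥ S *ᵥ u ω ≤ ‖S‖ * (x ⬝ᵥ x) := by
        filter_upwards [hproj] with ω hω
        calc u ω ⬝ᵥ S *ᵥ u ω ≤ ‖S‖ * (u ω ⬝ᵥ u ω) := quadform_le_opnorm S (u ω)
          _ ≤ ‖S‖ * (x ⬝ᵥ x) :=
            mul_le_mul_of_nonneg_left (proj_contract hω.1 hω.2 x) (norm_nonneg _)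
      calc ∫ ω, u ω ⬝ᵥ S *ᵥ u ω ∂μ ≤ ∫ _ω, ‖S‖ * (x ⬝ᵥ x) ∂μ :=
            integral_mono_ae hg3_int (integrable_const _) hb
        _ = ‖S‖ * (x ⬝ᵥ x) := by simp
    have hstart : x ⬝ᵥ Mm *ᵥ x
        = ∫ ω, x ⬝ᵥ (P ω * A ω * P ω * (A ω)ᵀ * P ω) *ᵥ x ∂μ := by
      rw [hMm, integral_quadform hPAPint x]
    rw [hstart]
    calc ∫ ω, x ⬝ᵥ (P ω * A ω * P ω * (A ω)ᵀ * P ω) *ᵥ x ∂μ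
        ≤ ∫ ω, u ω ⬝ᵥ (A ω * (A ω)ᵀ) *ᵥ u ω ∂μ := step_a
      _ = ∫ ω, u ω ⬝ᵥ S *ᵥ u ω ∂μ := step_b
      _ ≤ ‖S‖ * (x ⬝ᵥ x) := step_d
  exact opnorm_le_of_quadform Mm hsym (norm_nonneg S) h0 hq
end

section
/- Let A_1, …, A_t be i.i.d. d×d real random matrices with E[A_i] = Σ, where Σ is symmetric PSD. Let P be a fixed d×d orthogonal projection matrix, let ṽ be a unit eigenvector of PΣP for its largest eigenvalue λ̃_1, let η_1, …, η_t ≥ 0, and let B_t := (I + η_t P A_t P)(I + η_{t−1} P A_{t−1} P) ⋯ (I + η_1 P A_1 P). Then E[ṽᵀ B_t B_tᵀ ṽ] ≥ exp( Σ_{i=1}^t ( 2 η_i λ̃_1 − 4 η_i² λ̃_1² ) ). -/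
open Matrix MeasureTheory ProbabilityTheory

section AuxLemmas

lemma oja_exp_sub_sq_le (x : ℝ) (hx : 0 ≤ x) : Real.exp (x - x^2) ≤ 1 + x := by
  have h1 : (0:ℝ) < 1 - (x - x^2) := by nlinarith [sq_nonneg (x-1)]
  have h2 : 1 - (x - x^2) ≤ Real.exp (-(x - x^2)) := by
    have := Real.add_one_le_exp (-(x - x^2)); linarith
  have h3 : Real.exp (x - x^2) * (1 - (x - x^2)) ≤ 1 := by
    calc Real.exp (x - x^2) * (1 - (x - x^2)) ≤ Real.exp (x - x^2) * Real.exp (-(x - x^2)) :=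
          mul_le_mul_of_nonneg_left h2 (Real.exp_pos _).le
      _ = 1 := by rw [← Real.exp_add]; simp
  nlinarith [Real.exp_pos (x - x^2), sq_nonneg x, mul_nonneg hx (sq_nonneg x)]

variable {d : ℕ} {Ω : Type*}

lemma oja_dot_expand (tv : Fin d → ℝ) (N : Matrix (Fin d) (Fin d) ℝ) :
    tv ⬝ᵥ (N *ᵥ tv) = ∑ a, ∑ b, tv a * (N a b * tv b) := by
  simp [dotProduct, mulVec, Finset.mul_sum]

lemma oja_entry_expand (P X M : Matrix (Fin d) (Fin d) ℝ) (a b : Fin d) :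
    (P * X * P * M) a b = ∑ j, ∑ k, ∑ l, P a l * X l k * P k j * M j b := by
  simp [Matrix.mul_apply, Finset.sum_mul]

lemma oja_psd_quad_nonneg (D : Matrix (Fin d) (Fin d) ℝ) (x : Fin d → ℝ) :
    0 ≤ x ⬝ᵥ ((D * Dᵀ) *ᵥ x) := by
  rw [← Matrix.mulVec_mulVec, Matrix.dotProduct_mulVec, ← Matrix.mulVec_transpose]
  exact Finset.sum_nonneg fun i _ => mul_self_nonneg _

lemma oja_dot_symm_swap (M C : Matrix (Fin d) (Fin d) ℝ) (hM : Mᵀ = M) (tv : Fin d → ℝ) :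
    tv ⬝ᵥ ((M * Cᵀ) *ᵥ tv) = tv ⬝ᵥ ((C * M) *ᵥ tv) := by
  rw [Matrix.dotProduct_mulVec]
  have h1 : tv ᵥ* (M * Cᵀ) = (C * M) *ᵥ tv := by
    rw [← Matrix.mulVec_transpose, Matrix.transpose_mul, Matrix.transpose_transpose, hM]
  rw [h1, dotProduct_comm]

lemma oja_eigen_dot (P S EM : Matrix (Fin d) (Fin d) ℝ) (hsymm : (P * S * P)ᵀ = P * S * P)
    (lam1 : ℝ) (tv : Fin d → ℝ) (hev : (P * S * P) *ᵥ tv = lam1 • tv) :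
    tv ⬝ᵥ ((P * S * P * EM) *ᵥ tv) = lam1 * (tv ⬝ᵥ (EM *ᵥ tv)) := by
  rw [← Matrix.mulVec_mulVec, Matrix.dotProduct_mulVec]
  have h1 : tv ᵥ* (P * S * P) = lam1 • tv := by
    rw [← Matrix.mulVec_transpose, hsymm, hev]
  rw [h1, smul_dotProduct, smul_eq_mul]

lemma oja_quad_expand (P X Bs : Matrix (Fin d) (Fin d) ℝ) (c : ℝ) (tv : Fin d → ℝ) :
    tv ⬝ᵥ ((((1 + c • (P * X * P)) * Bs) * ((1 + c • (P * X * P)) * Bs)ᵀ) *ᵥ tv) =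
      tv ⬝ᵥ ((Bs * Bsᵀ) *ᵥ tv)
      + c * (tv ⬝ᵥ ((P * X * P * (Bs * Bsᵀ)) *ᵥ tv))
      + c * (tv ⬝ᵥ (((Bs * Bsᵀ) * (P * X * P)ᵀ) *ᵥ tv))
      + c * c * (tv ⬝ᵥ (((P * X * P) * (Bs * Bsᵀ) * (P * X * P)ᵀ) *ᵥ tv)) := by
  have h : ((1 + c • (P * X * P)) * Bs) * ((1 + c • (P * X * P)) * Bs)ᵀ =
      (Bs * Bsᵀ) + c • (P * X * P * (Bs * Bsᵀ)) + c • ((Bs * Bsᵀ) * (P * X * P)ᵀ)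
      + (c * c) • ((P * X * P) * (Bs * Bsᵀ) * (P * X * P)ᵀ) := by
    simp only [Matrix.transpose_mul, Matrix.transpose_add, Matrix.transpose_smul,
      Matrix.transpose_one, Matrix.mul_add, Matrix.add_mul, Matrix.smul_mul, Matrix.mul_smul,
      Matrix.one_mul, Matrix.mul_one, smul_add, smul_smul, Matrix.mul_assoc]
    abel
  rw [h]
  simp only [Matrix.add_mulVec, Matrix.smul_mulVec, dotProduct_add, dotProduct_smul,
    smul_eq_mul]

variable [MeasurableSpace Ω] {m : MeasurableSpace Ω}

lemma oja_measurable_matrix_entry {f : Ω → Matrix (Fin d) (Fin d) ℝ} (hf : Measurable[m] f)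
    (a b : Fin d) : Measurable[m] (fun ω => f ω a b) :=
  ((measurable_pi_apply b).comp ((measurable_pi_apply a).comp hf))

lemma oja_measurable_matrix_of {f : Ω → Matrix (Fin d) (Fin d) ℝ}
    (hf : ∀ a b, Measurable[m] (fun ω => f ω a b)) : Measurable[m] f :=
  measurable_pi_lambda _ fun a => measurable_pi_lambda _ fun b => hf a b

lemma oja_measurable_matrix_mul {f g : Ω → Matrix (Fin d) (Fin d) ℝ} (hf : Measurable[m] f)
    (hg : Measurable[m] g) : Measurable[m] (fun ω => f ω * g ω) := by
  apply oja_measurable_matrix_of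
  intro a b
  simp only [Matrix.mul_apply]
  exact Finset.measurable_sum _ fun k _ =>
    (oja_measurable_matrix_entry hf a k).mul (oja_measurable_matrix_entry hg k b)

lemma oja_integral_dot (μ : Measure Ω)
    (f : Ω → Matrix (Fin d) (Fin d) ℝ) (hf : ∀ a b, Integrable (fun ω => f ω a b) μ)
    (tv : Fin d → ℝ) :
    ∫ ω, tv ⬝ᵥ (f ω *ᵥ tv) ∂μ =
      tv ⬝ᵥ ((Matrix.of fun a b => ∫ ω, f ω a b ∂μ) *ᵥ tv) := by
  have h1 : ∀ ω, tv ⬝ᵥ (f ω *ᵥ tv) = ∑ a, ∑ b, tv a * (f ω a b * tv b) := fun ω => by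
    simp [dotProduct, mulVec, Finset.mul_sum]
  have h2 : tv ⬝ᵥ ((Matrix.of fun a b => ∫ ω, f ω a b ∂μ) *ᵥ tv)
      = ∑ a, ∑ b, tv a * ((∫ ω, f ω a b ∂μ) * tv b) := by
    simp [dotProduct, mulVec, Finset.mul_sum]
  simp only [h1, h2]
  rw [integral_finset_sum]
  · refine Finset.sum_congr rfl fun a _ => ?_
    rw [integral_finset_sum]
    · refine Finset.sum_congr rfl fun b _ => ?_
      rw [MeasureTheory.integral_const_mul, MeasureTheory.integral_mul_const]
    · exact fun b _ => (((hf a b).mul_const (tv b)).const_mul (tv a))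
  · intro a _
    exact integrable_finset_sum _ fun b _ => (((hf a b).mul_const (tv b)).const_mul (tv a))

lemma oja_integrable_dot (μ : Measure Ω)
    (f : Ω → Matrix (Fin d) (Fin d) ℝ) (hf : ∀ a b, Integrable (fun ω => f ω a b) μ)
    (tv : Fin d → ℝ) : Integrable (fun ω => tv ⬝ᵥ (f ω *ᵥ tv)) μ := by
  have h1 : (fun ω => tv ⬝ᵥ (f ω *ᵥ tv)) = fun ω => ∑ a, ∑ b, tv a * (f ω a b * tv b) := by
    funext ω; simp [dotProduct, mulVec, Finset.mul_sum]
  rw [h1]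
  exact integrable_finset_sum _ fun a _ =>
    integrable_finset_sum _ fun b _ => (((hf a b).mul_const (tv b)).const_mul (tv a))

end AuxLemmas

set_option maxHeartbeats 1000000 in
/-- **Lower bound for the expected Rayleigh quotient of the Oja product.**
Let `A 0, …, A (t-1)` be i.i.d. `d × d` real random matrices with entrywise
expectation `S` (symmetric PSD).  Let `P` be a fixed orthogonal projection, `ṽ` a
unit eigenvector of `P S P` for its largest eigenvalue `lam1`, `η i ≥ 0` learning
rates, and `B t = (I + η_{t-1} P A_{t-1} P) ⋯ (I + η_0 P A_0 P)` the Oja product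
(defined recursively, all relevant expectations existing).  Then
`E[ṽᵀ B t (B t)ᵀ ṽ] ≥ exp (∑ i, (2 η i lam1 - 4 η i ² lam1²))`. -/
theorem expectation_rayleigh_ojaProduct_ge {d t : ℕ} {Ω : Type*} [MeasurableSpace Ω]
    (μ : Measure Ω) [IsProbabilityMeasure μ]
    (A : Fin t → Ω → Matrix (Fin d) (Fin d) ℝ)
    (hAmeas : ∀ i, Measurable (A i))
    (hiid : iIndepFun A μ)
    (hident : ∀ i j, IdentDistrib (A i) (A j) μ μ)
    (S : Matrix (Fin d) (Fin d) ℝ) (hS : S.PosSemidef)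
    (hmean : ∀ i, (Matrix.of fun a b => ∫ ω, A i ω a b ∂μ) = S)
    (hmom : ∀ (i : Fin t) (a b c e : Fin d),
      Integrable (fun ω => (A i ω - S) a b * (A i ω - S) c e) μ)
    (P : Matrix (Fin d) (Fin d) ℝ) (hPsymm : Pᵀ = P) (hPproj : P * P = P)
    (lam1 : ℝ) (tv : Fin d → ℝ) (htv : tv ⬝ᵥ tv = 1)
    (hev : (P * S * P) *ᵥ tv = lam1 • tv)
    (hmax : ∀ (c : ℝ) (v : Fin d → ℝ), v ≠ 0 → (P * S * P) *ᵥ v = c • v → c ≤ lam1)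
    (η : Fin t → ℝ) (hη : ∀ i, 0 ≤ η i)
    (B : ℕ → Ω → Matrix (Fin d) (Fin d) ℝ)
    (hB0 : ∀ ω, B 0 ω = 1)
    (hBsucc : ∀ (i : ℕ) (hi : i < t) (ω : Ω),
      B (i + 1) ω = (1 + η ⟨i, hi⟩ • (P * A ⟨i, hi⟩ ω * P)) * B i ω)
    (hBint : ∀ (s : ℕ), s ≤ t → ∀ a b : Fin d,
      Integrable (fun ω => (B s ω * (B s ω)ᵀ) a b) μ) :
    Real.exp (∑ i : Fin t, (2 * η i * lam1 - 4 * η i ^ 2 * lam1 ^ 2)) ≤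
      ∫ ω, tv ⬝ᵥ ((B t ω * (B t ω)ᵀ) *ᵥ tv) ∂μ := by
  -- basic symmetry facts
  have hSsymm : Sᵀ = S := by
    have h := hS.1
    rw [Matrix.IsHermitian, Matrix.conjTranspose_eq_transpose_of_trivial] at h
    exact h
  have hPSP : (P * S * P)ᵀ = P * S * P := by
    rw [Matrix.transpose_mul, Matrix.transpose_mul, hPsymm, hSsymm, Matrix.mul_assoc]
  -- lam1 is nonnegative
  have hlam : 0 ≤ lam1 := by
    have h1 : tv ⬝ᵥ ((P * S * P) *ᵥ tv) = lam1 := by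
      rw [hev, dotProduct_smul, smul_eq_mul, htv, mul_one]
    rw [← h1, ← Matrix.mulVec_mulVec, ← Matrix.mulVec_mulVec, Matrix.dotProduct_mulVec]
    have h2 : tv ᵥ* P = P *ᵥ tv := by rw [← Matrix.mulVec_transpose, hPsymm]
    rw [h2]
    have := hS.dotProduct_mulVec_nonneg (P *ᵥ tv)
    simpa using this
  -- measurability of B with respect to the σ-algebra of the past
  set ms : ℕ → MeasurableSpace Ω :=
    fun s => ⨆ j ∈ {j : Fin t | (j : ℕ) < s}, MeasurableSpace.comap (A j) inferInstance with hms
  have hBmeas : ∀ s, s ≤ t → Measurable[ms s] (B s) := by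
    intro s
    induction s with
    | zero =>
      intro _
      have hB : B 0 = fun _ => (1 : Matrix (Fin d) (Fin d) ℝ) := funext hB0
      rw [hB]; exact measurable_const
    | succ s ih =>
      intro hst
      have hs : s < t := hst
      have hle : ms s ≤ ms (s + 1) := biSup_mono fun j hj => Nat.lt_succ_of_lt hj
      have hBs : Measurable[ms (s + 1)] (B s) := (ih hs.le).mono hle le_rfl
      have hA : Measurable[ms (s + 1)] (A ⟨s, hs⟩) := by
        rw [measurable_iff_comap_le]
        exact le_biSup (fun j : Fin t => MeasurableSpace.comap (A j) inferInstance)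
          (show (⟨s, hs⟩ : Fin t) ∈ {j : Fin t | (j : ℕ) < s + 1} from Nat.lt_succ_self s)
      have hBfun : B (s + 1) = fun ω => (1 + η ⟨s, hs⟩ • (P * A ⟨s, hs⟩ ω * P)) * B s ω :=
        funext (hBsucc s hs)
      rw [hBfun]
      refine oja_measurable_matrix_mul ?_ hBs
      apply oja_measurable_matrix_of
      intro a b
      simp only [Matrix.add_apply, Matrix.smul_apply, smul_eq_mul]
      exact measurable_const.add ((oja_measurable_matrix_entry (oja_measurable_matrix_mul
        (oja_measurable_matrix_mul measurable_const hA) measurable_const) a b).const_mul _)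
  -- independence of A s from B s
  have hIndep : ∀ (s : ℕ) (hs : s < t), IndepFun (A ⟨s, hs⟩) (B s) μ := by
    intro s hs
    set i : Fin t := ⟨s, hs⟩
    have hind := indep_biSup_compl (fun n => (hAmeas n).comap_le) hiid {i}
    have hL : MeasurableSpace.comap (A i) inferInstance ≤
        ⨆ n ∈ ({i} : Set (Fin t)), MeasurableSpace.comap (A n) inferInstance :=
      le_biSup (fun n : Fin t => MeasurableSpace.comap (A n) inferInstance) (Set.mem_singleton i)
    have hR : MeasurableSpace.comap (B s) inferInstance ≤
        ⨆ n ∈ ({i} : Set (Fin t))ᶜ, MeasurableSpace.comap (A n) inferInstance := by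
      refine le_trans ((hBmeas s hs.le).comap_le) ?_
      refine biSup_mono fun j hj => ?_
      simp only [Set.mem_compl_iff, Set.mem_singleton_iff]
      intro hji
      rw [hji] at hj
      exact lt_irrefl s hj
    exact indep_of_indep_of_le_left (indep_of_indep_of_le_right hind hR) hL
  -- the key product expectation
  have hkey : ∀ (s : ℕ) (hs : s < t) (a b c e : Fin d),
      Integrable (fun ω => A ⟨s, hs⟩ ω a b * (B s ω * (B s ω)ᵀ) c e) μ ∧
      ∫ ω, A ⟨s, hs⟩ ω a b * (B s ω * (B s ω)ᵀ) c e ∂μ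
        = S a b * ∫ ω, (B s ω * (B s ω)ᵀ) c e ∂μ := by
    intro s hs a b c e
    set i : Fin t := ⟨s, hs⟩
    have hmean' : ∫ ω, A i ω a b ∂μ = S a b := by rw [← hmean i]; rfl
    have hAe : Measurable (fun ω => A i ω a b) :=
      (measurable_pi_apply b).comp ((measurable_pi_apply a).comp (hAmeas i))
    have hAint : Integrable (fun ω => A i ω a b) μ := by
      have h2 : Integrable (fun ω => (A i ω a b - S a b) * (A i ω a b - S a b)) μ := by
        have := hmom i a b a b
        simpa [Matrix.sub_apply] using this
      have h3 : Integrable (fun ω => A i ω a b - S a b) μ := by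
        refine Integrable.mono' ((h2.add (integrable_const 1)).div_const 2)
          ((hAe.sub measurable_const).aestronglyMeasurable) ?_
        filter_upwards with ω
        rw [Real.norm_eq_abs]
        simp only [Pi.add_apply]
        nlinarith [sq_nonneg (|A i ω a b - S a b| - 1), abs_nonneg (A i ω a b - S a b),
          sq_abs (A i ω a b - S a b)]
      have h4 : (fun ω => A i ω a b) = fun ω => (A i ω a b - S a b) + S a b := by
        funext ω; ring
      rw [h4]
      exact h3.add (integrable_const (S a b))
    have hIe : IndepFun (fun ω => A i ω a b) (fun ω => (B s ω * (B s ω)ᵀ) c e) μ := by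
      have hφ : Measurable (fun X : Matrix (Fin d) (Fin d) ℝ => X a b) :=
        (measurable_pi_apply b).comp (measurable_pi_apply a)
      have hψ : Measurable (fun X : Matrix (Fin d) (Fin d) ℝ => (X * Xᵀ) c e) := by
        simp only [Matrix.mul_apply, Matrix.transpose_apply]
        exact Finset.measurable_sum _ fun k _ =>
          Measurable.mul (f := fun X : Matrix (Fin d) (Fin d) ℝ => X c k) (g := fun X => X e k)
            ((measurable_pi_apply k).comp (measurable_pi_apply c))
            ((measurable_pi_apply k).comp (measurable_pi_apply e))
      exact (hIndep s hs).comp hφ hψ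
    have hMint := hBint s hs.le c e
    refine ⟨hIe.integrable_mul hAint hMint, ?_⟩
    have h5 := hIe.integral_mul_eq_mul_integral hAint.aestronglyMeasurable hMint.aestronglyMeasurable
    have h6 : ((fun ω => A i ω a b) * fun ω => (B s ω * (B s ω)ᵀ) c e)
        = fun ω => A i ω a b * (B s ω * (B s ω)ᵀ) c e := rfl
    rw [h6] at h5
    rw [h5, hmean']
  -- the cross term : entrywise integrability and expectation
  have hcross : ∀ (s : ℕ) (hs : s < t) (a b : Fin d),
      Integrable (fun ω => (P * A ⟨s, hs⟩ ω * P * (B s ω * (B s ω)ᵀ)) a b) μ ∧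
      ∫ ω, (P * A ⟨s, hs⟩ ω * P * (B s ω * (B s ω)ᵀ)) a b ∂μ
        = (P * S * P * (Matrix.of fun c e => ∫ ω, (B s ω * (B s ω)ᵀ) c e ∂μ)) a b := by
    intro s hs a b
    set i : Fin t := ⟨s, hs⟩
    have hterm : ∀ j k l : Fin d,
        Integrable (fun ω => P a l * A i ω l k * P k j * (B s ω * (B s ω)ᵀ) j b) μ ∧
        ∫ ω, P a l * A i ω l k * P k j * (B s ω * (B s ω)ᵀ) j b ∂μ
          = P a l * S l k * P k j
            * (Matrix.of fun c e => ∫ ω, (B s ω * (B s ω)ᵀ) c e ∂μ) j b := by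
      intro j k l
      have hre : (fun ω => P a l * A i ω l k * P k j * (B s ω * (B s ω)ᵀ) j b)
          = fun ω => (P a l * P k j) * (A i ω l k * (B s ω * (B s ω)ᵀ) j b) := by
        funext ω; ring
      constructor
      · rw [hre]; exact ((hkey s hs l k j b).1).const_mul _
      · rw [hre, MeasureTheory.integral_const_mul, (hkey s hs l k j b).2]
        simp only [Matrix.of_apply]
        ring
    have hexp : (fun ω => (P * A i ω * P * (B s ω * (B s ω)ᵀ)) a b)
        = fun ω => ∑ j, ∑ k, ∑ l, P a l * A i ω l k * P k j * (B s ω * (B s ω)ᵀ) j b := by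
      funext ω; exact oja_entry_expand P (A i ω) (B s ω * (B s ω)ᵀ) a b
    constructor
    · rw [hexp]
      exact integrable_finset_sum _ fun j _ => integrable_finset_sum _ fun k _ =>
        integrable_finset_sum _ fun l _ => (hterm j k l).1
    · rw [hexp]
      rw [integral_finset_sum _ fun j _ => integrable_finset_sum _ fun k _ =>
        integrable_finset_sum _ fun l _ => (hterm j k l).1]
      rw [oja_entry_expand]
      refine Finset.sum_congr rfl fun j _ => ?_
      rw [integral_finset_sum _ fun k _ => integrable_finset_sum _ fun l _ => (hterm j k l).1]
      refine Finset.sum_congr rfl fun k _ => ?_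
      rw [integral_finset_sum _ fun l _ => (hterm j k l).1]
      exact Finset.sum_congr rfl fun l _ => (hterm j k l).2
  -- integrability of the Rayleigh quotients
  have hqint : ∀ (s : ℕ), s ≤ t →
      Integrable (fun ω => tv ⬝ᵥ ((B s ω * (B s ω)ᵀ) *ᵥ tv)) μ := fun s hs =>
    oja_integrable_dot μ _ (hBint s hs) tv
  have hqnonneg : ∀ (s : ℕ) (ω : Ω), 0 ≤ tv ⬝ᵥ ((B s ω * (B s ω)ᵀ) *ᵥ tv) := fun s ω =>
    oja_psd_quad_nonneg (B s ω) tv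
  -- the one-step inequality
  have hstep : ∀ (s : ℕ) (hs : s < t),
      (1 + 2 * η ⟨s, hs⟩ * lam1) * ∫ ω, tv ⬝ᵥ ((B s ω * (B s ω)ᵀ) *ᵥ tv) ∂μ ≤
        ∫ ω, tv ⬝ᵥ ((B (s+1) ω * (B (s+1) ω)ᵀ) *ᵥ tv) ∂μ := by
    intro s hs
    set i : Fin t := ⟨s, hs⟩
    set EM : Matrix (Fin d) (Fin d) ℝ :=
      Matrix.of fun c e => ∫ ω, (B s ω * (B s ω)ᵀ) c e ∂μ with hEM
    -- pointwise lower bound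
    have hpt : ∀ ω, tv ⬝ᵥ ((B s ω * (B s ω)ᵀ) *ᵥ tv)
        + 2 * η i * (tv ⬝ᵥ ((P * A i ω * P * (B s ω * (B s ω)ᵀ)) *ᵥ tv))
        ≤ tv ⬝ᵥ ((B (s+1) ω * (B (s+1) ω)ᵀ) *ᵥ tv) := by
      intro ω
      rw [hBsucc s hs ω]
      rw [oja_quad_expand P (A i ω) (B s ω) (η i) tv]
      have hMs : (B s ω * (B s ω)ᵀ)ᵀ = B s ω * (B s ω)ᵀ := by
        rw [Matrix.transpose_mul, Matrix.transpose_transpose]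
      rw [oja_dot_symm_swap _ _ hMs tv]
      have hnn : 0 ≤ tv ⬝ᵥ (((P * A i ω * P) * (B s ω * (B s ω)ᵀ) * (P * A i ω * P)ᵀ) *ᵥ tv) := by
        have hfac : (P * A i ω * P) * (B s ω * (B s ω)ᵀ) * (P * A i ω * P)ᵀ
            = ((P * A i ω * P) * B s ω) * ((P * A i ω * P) * B s ω)ᵀ := by
          simp only [Matrix.transpose_mul, Matrix.mul_assoc]
        rw [hfac]
        exact oja_psd_quad_nonneg _ tv
      have hc2 : 0 ≤ η i * η i := mul_nonneg (hη i) (hη i)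
      have := mul_nonneg hc2 hnn
      linarith
    -- integrate
    have hcint : Integrable
        (fun ω => tv ⬝ᵥ ((P * A i ω * P * (B s ω * (B s ω)ᵀ)) *ᵥ tv)) μ :=
      oja_integrable_dot μ _ (fun a b => (hcross s hs a b).1) tv
    have hcval : ∫ ω, tv ⬝ᵥ ((P * A i ω * P * (B s ω * (B s ω)ᵀ)) *ᵥ tv) ∂μ
        = lam1 * (tv ⬝ᵥ (EM *ᵥ tv)) := by
      rw [oja_integral_dot μ _ (fun a b => (hcross s hs a b).1) tv]
      have h7 : (Matrix.of fun a b =>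
          ∫ ω, (P * A i ω * P * (B s ω * (B s ω)ᵀ)) a b ∂μ) = P * S * P * EM := by
        ext a b
        exact (hcross s hs a b).2
      rw [h7]
      exact oja_eigen_dot P S EM hPSP lam1 tv hev
    have hqval : ∫ ω, tv ⬝ᵥ ((B s ω * (B s ω)ᵀ) *ᵥ tv) ∂μ = tv ⬝ᵥ (EM *ᵥ tv) :=
      oja_integral_dot μ _ (hBint s hs.le) tv
    have hmono : ∫ ω, (tv ⬝ᵥ ((B s ω * (B s ω)ᵀ) *ᵥ tv)
        + 2 * η i * (tv ⬝ᵥ ((P * A i ω * P * (B s ω * (B s ω)ᵀ)) *ᵥ tv))) ∂μ ≤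
        ∫ ω, tv ⬝ᵥ ((B (s+1) ω * (B (s+1) ω)ᵀ) *ᵥ tv) ∂μ := by
      refine integral_mono ?_ (hqint (s+1) hs) hpt
      exact (hqint s hs.le).add (hcint.const_mul _)
    rw [integral_add (hqint s hs.le) (hcint.const_mul _)] at hmono
    rw [MeasureTheory.integral_const_mul, hcval, hqval] at hmono
    rw [hqval]
    nlinarith [hmono]
  -- the product lower bound by induction
  set g : ℕ → ℝ := fun n => if h : n < t then 1 + 2 * η ⟨n, h⟩ * lam1 else 1 with hg
  have hgpos : ∀ n, 0 < g n := by
    intro n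
    by_cases h : n < t
    · simp only [hg, dif_pos h]
      have := hη ⟨n, h⟩
      nlinarith
    · simp [hg, dif_neg h]
  have hind : ∀ (s : ℕ), s ≤ t →
      ∏ n ∈ Finset.range s, g n ≤ ∫ ω, tv ⬝ᵥ ((B s ω * (B s ω)ᵀ) *ᵥ tv) ∂μ := by
    intro s
    induction s with
    | zero =>
      intro _
      have h0 : ∀ ω, tv ⬝ᵥ ((B 0 ω * (B 0 ω)ᵀ) *ᵥ tv) = 1 := by
        intro ω
        rw [hB0 ω]
        simp [htv]
      simp only [h0]
      simp
    | succ s ih =>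
      intro hst
      have hs : s < t := hst
      have h1 := hstep s hs
      have h2 := ih hs.le
      rw [Finset.prod_range_succ]
      have hgs : g s = 1 + 2 * η ⟨s, hs⟩ * lam1 := by simp [hg, dif_pos hs]
      rw [hgs]
      calc (∏ n ∈ Finset.range s, g n) * (1 + 2 * η ⟨s, hs⟩ * lam1)
          ≤ (∫ ω, tv ⬝ᵥ ((B s ω * (B s ω)ᵀ) *ᵥ tv) ∂μ) * (1 + 2 * η ⟨s, hs⟩ * lam1) := by
            refine mul_le_mul_of_nonneg_right h2 ?_
            have := hη ⟨s, hs⟩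
            nlinarith
        _ = (1 + 2 * η ⟨s, hs⟩ * lam1) * ∫ ω, tv ⬝ᵥ ((B s ω * (B s ω)ᵀ) *ᵥ tv) ∂μ := by ring
        _ ≤ _ := h1
  -- final exponential estimate
  have hfinal := hind t le_rfl
  refine le_trans ?_ hfinal
  rw [Real.exp_sum]
  have hprod : ∏ n ∈ Finset.range t, g n = ∏ i : Fin t, (1 + 2 * η i * lam1) := by
    rw [← Fin.prod_univ_eq_prod_range g t]
    refine Finset.prod_congr rfl fun i _ => ?_
    simp [hg, dif_pos i.isLt]
  rw [hprod]
  refine Finset.prod_le_prod (fun i _ => (Real.exp_pos _).le) fun i _ => ?_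
  have hx : 0 ≤ 2 * η i * lam1 := by
    have := hη i
    positivity
  have := oja_exp_sub_sq_le (2 * η i * lam1) hx
  calc Real.exp (2 * η i * lam1 - 4 * η i ^ 2 * lam1 ^ 2)
      = Real.exp (2 * η i * lam1 - (2 * η i * lam1) ^ 2) := by ring_nf
    _ ≤ 1 + 2 * η i * lam1 := this
end
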